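/- arXiv:math/0606722 — 9 statements merged into one kernel-verified Lean document; each statement's English description precedes it below -/
import Mathlib

section
/- Let X be a normed complex vector space, let Ω be a compact Hausdorff topological space, and let j : Ω → X* be a map into the continuous dual of X such that (i) for every x ∈ X the function ω ↦ (j ω)(x) is continuous on Ω, and (ii) for every x ∈ X one has ‖x‖ = sup_{ω ∈ Ω} |(j ω)(x)|. Then for every continuous linear functional ℓ* on X there exists a complex Borel measure ρ on Ω (of finite total variation) such that for all x ∈ X, ℓ*(x) = ∫_Ω (j ω)(x) dρ(ω). -/
/-
By Hahn–Banach, `ℓstar` extends through the isometric embedding `x ↦ (ω ↦ j ω x)` of `X` into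
`C(Ω, ℂ)` to a functional `Λ`. The real and imaginary parts of `Λ` on `C(Ω, ℝ)` are bounded, so each
is a difference of two positive functionals (a second Hahn–Banach argument, on `C(Ω, ℝ) × C(Ω, ℝ)`),
and positive functionals are integrals against finite measures by Riesz–Markov–Kakutani. The four
measures combine into the complex measure `ρ`.
-/

open MeasureTheory

section PosPart

variable {𝕜 E : Type*} [Field 𝕜] [LinearOrder 𝕜] [IsStrictOrderedRing 𝕜]
  [AddCommGroup E] [Lattice E] [Module 𝕜 E] [PosSMulMono 𝕜 E]

lemma posPart_smul_of_pos {c : 𝕜} (hc : 0 < c) (u : E) : (c • u)⁺ = c • u⁺ := by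
  refine le_antisymm (sup_le (smul_le_smul_of_nonneg_left le_sup_left hc.le)
    (smul_nonneg hc.le le_sup_right)) ?_
  have : u⁺ ≤ c⁻¹ • (c • u)⁺ := by
    refine sup_le ?_ (smul_nonneg (inv_nonneg.2 hc.le) (posPart_nonneg _))
    calc u = c⁻¹ • (c • u) := (inv_smul_smul₀ hc.ne' u).symm
      _ ≤ c⁻¹ • (c • u)⁺ := smul_le_smul_of_nonneg_left (le_posPart _) (inv_nonneg.2 hc.le)
  calc c • u⁺ ≤ c • c⁻¹ • (c • u)⁺ := smul_le_smul_of_nonneg_left this hc.le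
    _ = (c • u)⁺ := smul_inv_smul₀ hc.ne' _

end PosPart

section NormedLattice

variable {E : Type*} [NormedAddCommGroup E] [Lattice E] [HasSolidNorm E] [IsOrderedAddMonoid E]

lemma norm_posPart_add_le (u v : E) : ‖(u + v)⁺‖ ≤ ‖u⁺‖ + ‖v⁺‖ := by
  have hnonneg : 0 ≤ u⁺ + v⁺ := add_nonneg (posPart_nonneg u) (posPart_nonneg v)
  have hle : (u + v)⁺ ≤ u⁺ + v⁺ := sup_le (add_le_add (le_posPart u) (le_posPart v)) hnonneg
  refine (norm_le_norm_of_abs_le_abs ?_).trans (norm_add_le _ _)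
  rwa [abs_of_nonneg (posPart_nonneg _), abs_of_nonneg hnonneg]

lemma norm_le_norm_posPart_add_norm_negPart (u : E) : ‖u‖ ≤ ‖u⁺‖ + ‖u⁻‖ := by
  rw [← norm_abs_eq_norm, ← posPart_add_negPart]
  exact norm_add_le _ _

theorem ContinuousLinearMap.exists_positiveLinearMap_sub [NormedSpace ℝ E] [PosSMulMono ℝ E]
    (Φ : E →L[ℝ] ℝ) : ∃ Ψ₁ Ψ₂ : E →ₚ[ℝ] ℝ, ∀ f, Φ f = Ψ₁ f - Ψ₂ f := by
  -- Extend `(f, -f) ↦ Φ f` from the antidiagonal of `E × E` to some `g` dominated by `N`;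
  -- since `N` vanishes on the negative cone, `g` is positive, and `Φ f = g (f, 0) - g (0, f)`.
  let N : E × E → ℝ := fun p => ‖Φ‖ * (‖p.1⁺‖ + ‖p.2⁺‖)
  have N_hom : ∀ c : ℝ, 0 < c → ∀ p, N (c • p) = c * N p := by
    intro c hc p
    simp only [N, Prod.smul_fst, Prod.smul_snd, posPart_smul_of_pos hc, norm_smul,
      Real.norm_of_nonneg hc.le]
    ring
  have N_add : ∀ p q, N (p + q) ≤ N p + N q := by
    intro p q
    have := add_le_add (norm_posPart_add_le p.1 q.1) (norm_posPart_add_le p.2 q.2)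
    simp only [N, Prod.fst_add, Prod.snd_add]
    nlinarith [norm_nonneg Φ]
  let D : Submodule ℝ (E × E) := LinearMap.ker (LinearMap.fst ℝ E E + LinearMap.snd ℝ E E)
  have hD : ∀ p ∈ D, p.2 = -p.1 := fun p hp => eq_neg_of_add_eq_zero_right hp
  obtain ⟨g, hgD, hgN⟩ := exists_extension_of_le_sublinear
    ⟨D, (Φ.toLinearMap ∘ₗ LinearMap.fst ℝ E E).domRestrict D⟩ N N_hom N_add fun p => by
      show Φ (p : E × E).1 ≤ ‖Φ‖ * (‖(p : E × E).1⁺‖ + ‖(p : E × E).2⁺‖)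
      rw [hD p p.2, posPart_neg]
      calc Φ (p : E × E).1 ≤ ‖Φ‖ * ‖(p : E × E).1‖ := (le_abs_self _).trans (Φ.le_opNorm _)
        _ ≤ _ := by gcongr; exact norm_le_norm_posPart_add_norm_negPart _
  have hpos : ∀ p : E × E, 0 ≤ p → 0 ≤ g p := by
    intro p hp
    have h := hgN (-p)
    simp only [N, Prod.fst_neg, Prod.snd_neg, posPart_eq_zero.2 (neg_nonpos.2 hp.1),
      posPart_eq_zero.2 (neg_nonpos.2 hp.2), norm_zero, add_zero, mul_zero, map_neg] at h
    linarith
  refine ⟨.mk₀ (g ∘ₗ .inl ℝ E E) fun f hf => hpos (f, 0) ⟨hf, le_rfl⟩,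
    .mk₀ (g ∘ₗ .inr ℝ E E) fun f hf => hpos (0, f) ⟨le_rfl, hf⟩, fun f => ?_⟩
  have hf : g (f, -f) = Φ f := hgD ⟨(f, -f), by simp [D]⟩
  rw [← hf, show (f, -f) = LinearMap.inl ℝ E E f - LinearMap.inr ℝ E E f by simp, map_sub]
  rfl

end NormedLattice

theorem LinearIsometry.exists_strongDual_comp_eq {𝕜 X Y : Type*} [RCLike 𝕜]
    [NormedAddCommGroup X] [NormedSpace 𝕜 X] [NormedAddCommGroup Y] [NormedSpace 𝕜 Y]
    (T : X →ₗᵢ[𝕜] Y) (ℓ : StrongDual 𝕜 X) : ∃ Λ : StrongDual 𝕜 Y, ∀ x, Λ (T x) = ℓ x := by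
  obtain ⟨Λ, hΛ, -⟩ := exists_extension_norm_eq (LinearMap.range T.toLinearMap)
    (ℓ.comp (T.equivRange.symm.toContinuousLinearEquiv : _ →L[𝕜] X))
  exact ⟨Λ, fun x => by simpa using hΛ (T.equivRange x)⟩

section Integral

variable {Ω : Type*} [MeasurableSpace Ω]

noncomputable def signedIntegral {E : Type*} [NormedAddCommGroup E] [NormedSpace ℝ E]
    (s : SignedMeasure Ω) (f : Ω → E) : E :=
  ∫ ω, f ω ∂s.toJordanDecomposition.posPart - ∫ ω, f ω ∂s.toJordanDecomposition.negPart

noncomputable def complexIntegral (ρ : ComplexMeasure Ω) (F : Ω → ℂ) : ℂ :=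
  signedIntegral (ComplexMeasure.re ρ) F + Complex.I * signedIntegral (ComplexMeasure.im ρ) F

end Integral

section CompactSpace

variable {Ω : Type*} [TopologicalSpace Ω] [CompactSpace Ω]

instance ContinuousMap.instHasSolidNorm : HasSolidNorm C(Ω, ℝ) where
  solid f g h := (ContinuousMap.norm_le _ (norm_nonneg g)).2 fun ω =>
    calc ‖f ω‖ = |f| ω := by simp
      _ ≤ |g| ω := h ω
      _ = ‖g ω‖ := by simp
      _ ≤ ‖g‖ := g.norm_coe_le_norm ω

variable [MeasurableSpace Ω] [OpensMeasurableSpace Ω]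

lemma ContinuousMap.integrable_of_compactSpace {E : Type*} [NormedAddCommGroup E]
    (f : C(Ω, E)) (μ : Measure Ω) [IsFiniteMeasure μ] : Integrable f μ :=
  f.continuous.integrable_of_hasCompactSupport (.of_compactSpace _)

lemma signedIntegral_toSignedMeasure_sub {E : Type*} [NormedAddCommGroup E] [NormedSpace ℝ E]
    (μ ν : Measure Ω) [IsFiniteMeasure μ] [IsFiniteMeasure ν] (f : C(Ω, E)) :
    signedIntegral (μ.toSignedMeasure - ν.toSignedMeasure) f = ∫ ω, f ω ∂μ - ∫ ω, f ω ∂ν := by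
  set j := (μ.toSignedMeasure - ν.toSignedMeasure).toJordanDecomposition with hj
  have hmeas : μ + j.negPart = j.posPart + ν := by
    have h := (μ.toSignedMeasure - ν.toSignedMeasure).toSignedMeasure_toJordanDecomposition
    rw [← hj, JordanDecomposition.toSignedMeasure, sub_eq_sub_iff_add_eq_add] at h
    rw [← Measure.toSignedMeasure_eq_toSignedMeasure_iff, Measure.toSignedMeasure_add,
      Measure.toSignedMeasure_add, h]
  have hint := congrArg (fun m => ∫ ω, f ω ∂m) hmeas
  simp only [integral_add_measure (f.integrable_of_compactSpace _)
    (f.integrable_of_compactSpace _)] at hint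
  rw [signedIntegral, ← hj, sub_eq_sub_iff_add_eq_add, add_comm, hint, add_comm]

lemma signedIntegral_eq_re_add_im (s : SignedMeasure Ω) (F : C(Ω, ℂ)) :
    signedIntegral s F = (signedIntegral s fun ω => (F ω).re : ℝ) +
      (signedIntegral s fun ω => (F ω).im : ℝ) * Complex.I := by
  have h (μ : Measure Ω) [IsFiniteMeasure μ] :
      ∫ ω, F ω ∂μ = (∫ ω, (F ω).re ∂μ : ℝ) + (∫ ω, (F ω).im ∂μ : ℝ) * Complex.I :=
    (integral_re_add_im (F.integrable_of_compactSpace μ)).symm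
  rw [signedIntegral, signedIntegral, signedIntegral, h, h]
  push_cast
  ring

end CompactSpace

section RieszMarkovKakutani

variable {Ω : Type*} [TopologicalSpace Ω] [CompactSpace Ω] [T2Space Ω]
  [MeasurableSpace Ω] [BorelSpace Ω]

theorem PositiveLinearMap.exists_integral_eq (Ψ : C(Ω, ℝ) →ₚ[ℝ] ℝ) :
    ∃ μ : Measure Ω, IsFiniteMeasure μ ∧ ∀ f : C(Ω, ℝ), Ψ f = ∫ ω, f ω ∂μ := by
  let Λ : CompactlySupportedContinuousMap Ω ℝ →ₚ[ℝ] ℝ :=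
    { toFun f := Ψ f.toContinuousMap
      map_add' f g := map_add Ψ f.toContinuousMap g.toContinuousMap
      map_smul' c f := map_smul Ψ c f.toContinuousMap
      monotone' f g h := Ψ.monotone' h }
  exact ⟨RealRMK.rieszMeasure Λ, inferInstance, fun f =>
    (RealRMK.integral_rieszMeasure Λ (CompactlySupportedContinuousMap.continuousMapEquiv f)).symm⟩

theorem ContinuousLinearMap.exists_signedMeasure_apply_eq (Φ : C(Ω, ℝ) →L[ℝ] ℝ) :
    ∃ s : SignedMeasure Ω, ∀ f : C(Ω, ℝ), Φ f = signedIntegral s f := by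
  obtain ⟨Ψ₁, Ψ₂, hΦ⟩ := Φ.exists_positiveLinearMap_sub
  obtain ⟨μ₁, _, hμ₁⟩ := Ψ₁.exists_integral_eq
  obtain ⟨μ₂, _, hμ₂⟩ := Ψ₂.exists_integral_eq
  exact ⟨μ₁.toSignedMeasure - μ₂.toSignedMeasure, fun f => by
    rw [hΦ, hμ₁, hμ₂, signedIntegral_toSignedMeasure_sub]⟩

theorem ContinuousLinearMap.exists_complexMeasure_apply_eq (Λ : C(Ω, ℂ) →L[ℂ] ℂ) :
    ∃ ρ : ComplexMeasure Ω, ∀ F : C(Ω, ℂ), Λ F = complexIntegral ρ F := by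
  let ι := ContinuousLinearMap.compLeftContinuous ℝ Ω Complex.ofRealCLM
  let re := ContinuousLinearMap.compLeftContinuous ℝ Ω Complex.reCLM
  let im := ContinuousLinearMap.compLeftContinuous ℝ Ω Complex.imCLM
  obtain ⟨s, hs⟩ :=
    (Complex.reCLM.comp ((Λ.restrictScalars ℝ).comp ι)).exists_signedMeasure_apply_eq
  obtain ⟨t, ht⟩ :=
    (Complex.imCLM.comp ((Λ.restrictScalars ℝ).comp ι)).exists_signedMeasure_apply_eq
  have hΛι : ∀ g, Λ (ι g) = signedIntegral s g + signedIntegral t g * Complex.I := fun g => by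
    rw [← hs, ← ht]
    exact (Complex.re_add_im _).symm
  refine ⟨s.toComplexMeasure t, fun F => ?_⟩
  have hF : F = ι (re F) + Complex.I • ι (im F) := by
    ext ω
    simp [ι, re, im, Complex.ext_iff]
  calc Λ F = Λ (ι (re F)) + Complex.I * Λ (ι (im F)) := by
        conv_lhs => rw [hF]
        rw [map_add, map_smul, smul_eq_mul]
    _ = complexIntegral (s.toComplexMeasure t) F := by
        rw [hΛι, hΛι, complexIntegral, SignedMeasure.re_toComplexMeasure,
          SignedMeasure.im_toComplexMeasure, signedIntegral_eq_re_add_im s F,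
          signedIntegral_eq_re_add_im t F]
        change _ = (signedIntegral s (re F) + signedIntegral s (im F) * Complex.I) +
          Complex.I * (signedIntegral t (re F) + signedIntegral t (im F) * Complex.I)
        ring

end RieszMarkovKakutani

/-- Every continuous linear functional on a normed complex vector space `X`
whose norm is computed by a compact Hausdorff family `Ω` of functionals (via `j`) is
represented by integration against a complex Borel measure on `Ω`. -/
theorem stmt0 {X : Type*} [NormedAddCommGroup X] [NormedSpace ℂ X]
    {Ω : Type*} [TopologicalSpace Ω] [CompactSpace Ω] [T2Space Ω]
    [MeasurableSpace Ω] [BorelSpace Ω]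
    (j : Ω → (X →L[ℂ] ℂ))
    (hcont : ∀ x : X, Continuous fun ω => j ω x)
    (hnorm : ∀ x : X, ‖x‖ = ⨆ ω : Ω, ‖j ω x‖)
    (ℓstar : X →L[ℂ] ℂ) :
    ∃ ρ : ComplexMeasure Ω, ∀ x : X,
      ℓstar x =
        ((∫ ω, j ω x ∂(ComplexMeasure.re ρ).toJordanDecomposition.posPart)
          - (∫ ω, j ω x ∂(ComplexMeasure.re ρ).toJordanDecomposition.negPart))
        + Complex.I *
          ((∫ ω, j ω x ∂(ComplexMeasure.im ρ).toJordanDecomposition.posPart)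
            - (∫ ω, j ω x ∂(ComplexMeasure.im ρ).toJordanDecomposition.negPart)) := by
  let T : X →ₗᵢ[ℂ] C(Ω, ℂ) :=
    { toFun x := ⟨fun ω => j ω x, hcont x⟩
      map_add' x y := by ext; simp
      map_smul' c x := by ext; simp
      norm_map' x := by rw [hnorm, ContinuousMap.norm_eq_iSup_norm]; rfl }
  obtain ⟨Λ, hΛ⟩ := T.exists_strongDual_comp_eq ℓstar
  obtain ⟨ρ, hρ⟩ := Λ.exists_complexMeasure_apply_eq
  exact ⟨ρ, fun x => (hΛ x).symm.trans (hρ (T x))⟩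
end

section
/- Let (X, μ) be a measurable space with a finite measure μ and T : X → X a measurable map. Let B be a complex Banach space, L : B → B a bounded linear operator, and P : B → B a bounded linear projection (P ∘ P = P) whose range is finite dimensional and which commutes with L (L ∘ P = P ∘ L); let σ > 0 and assume that the spectral radius of the operator L ∘ (Id − P) is strictly less than σ. Let F₁ and F₂ be normed complex vector spaces, let j₁ : F₁ → (X → ℂ) and j₂ : F₂ → (X → ℂ) be linear maps, and let Φ₁ : F₁ → B and Φ₂ : F₂ → B* be bounded linear maps such that for all n ∈ ℕ, ψ₁ ∈ F₁ and ψ₂ ∈ F₂ the function x ↦ (j₁ψ₁)(x) · (j₂ψ₂)(Tⁿ x) is μ-integrable and ∫ (j₁ψ₁) · (j₂ψ₂)∘Tⁿ dμ = (Φ₂ψ₂)(Lⁿ(Φ₁ψ₁)). Then there exists a constant C > 0 such that for all n ∈ ℕ, ψ₁ ∈ F₁ and ψ₂ ∈ F₂, |∫ (j₁ψ₁) · (j₂ψ₂)∘Tⁿ dμ − (Φ₂ψ₂)(Lⁿ P (Φ₁ψ₁))| ≤ C σⁿ ‖ψ₁‖_{F₁} ‖ψ₂‖_{F₂}. (Since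 P has finite rank and commutes with L, setting F := P(B), M := the restriction of L to F, τ₁ := P ∘ Φ₁ and τ₂(ψ₂) := the restriction of Φ₂ψ₂ to F, this says the correlations ∫ ψ₁ · ψ₂∘Tⁿ dμ equal τ₂(ψ₂) Mⁿ τ₁(ψ₁) up to an error C σⁿ ‖ψ₁‖ ‖ψ₂‖.) -/
open MeasureTheory Filter Asymptotics

/-! Write `Q = 1 - P`. Since `Q` is an idempotent commuting with `L`, the error term
`Lⁿ - Lⁿ P = Lⁿ Q` equals `(L Q)ⁿ Q`, and Gelfand's formula turns the spectral radius bound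
on `L Q` into `‖(L Q)ⁿ‖ ≤ C σⁿ`. -/

lemma pos_of_spectralRadius_lt {𝕜 A : Type*} [NormedField 𝕜] [Ring A] [Algebra 𝕜 A] {a : A}
    {σ : ℝ} (h : spectralRadius 𝕜 a < ENNReal.ofReal σ) : 0 < σ :=
  ENNReal.ofReal_pos.mp (h.trans_le' bot_le)

section BanachAlgebra

variable {A : Type*} [NormedRing A] [NormedAlgebra ℂ A] [CompleteSpace A]

lemma eventually_norm_pow_le_of_spectralRadius_lt {a : A} {σ : ℝ}
    (h : spectralRadius ℂ a < ENNReal.ofReal σ) : ∀ᶠ n in atTop, ‖a ^ n‖ ≤ σ ^ n := by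
  filter_upwards
    [(spectrum.pow_norm_pow_one_div_tendsto_nhds_spectralRadius a).eventually_lt_const h,
      eventually_ne_atTop 0] with n hn hn0
  have hroot : ‖a ^ n‖ ^ (1 / n : ℝ) ≤ σ :=
    (ENNReal.ofReal_lt_ofReal_iff'.mp hn).1.le
  calc ‖a ^ n‖ = (‖a ^ n‖ ^ (1 / n : ℝ)) ^ n := by
        rw [one_div, Real.rpow_inv_natCast_pow (norm_nonneg _) hn0]
    _ ≤ σ ^ n := by gcongr

lemma exists_norm_pow_le_of_spectralRadius_lt {a : A} {σ : ℝ}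
    (h : spectralRadius ℂ a < ENNReal.ofReal σ) : ∃ C > 0, ∀ n : ℕ, ‖a ^ n‖ ≤ C * σ ^ n := by
  have hσ : 0 < σ := pos_of_spectralRadius_lt h
  have hO : (fun n : ℕ => a ^ n) =O[atTop] fun n => σ ^ n :=
    IsBigO.of_bound 1 <| (eventually_norm_pow_le_of_spectralRadius_lt h).mono fun n hn => by
      rwa [one_mul, Real.norm_of_nonneg (pow_nonneg hσ.le n)]
  obtain ⟨C, hC, hbound⟩ := bound_of_isBigO_nat_atTop hO
  refine ⟨C, hC, fun n => ?_⟩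
  simpa [abs_of_pos hσ] using hbound (pow_ne_zero n hσ.ne')

end BanachAlgebra

lemma IsIdempotentElem.mul_pow_mul_of_commute {M : Type*} [Monoid M] {l q : M}
    (hq : IsIdempotentElem q) (hlq : Commute l q) (n : ℕ) : (l * q) ^ n * q = l ^ n * q := by
  rw [hlq.mul_pow, mul_assoc, ← pow_succ, hq.pow_succ_eq]

theorem stmt1_general {X : Type*} [MeasurableSpace X] (μ : Measure X)
    (T : X → X)
    {B : Type*} [NormedAddCommGroup B] [NormedSpace ℂ B] [CompleteSpace B]
    (L P : B →L[ℂ] B) (hPP : P ∘L P = P)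
    (hcomm : L ∘L P = P ∘L L)
    (σ : ℝ)
    (hspec : spectralRadius ℂ (L ∘L (ContinuousLinearMap.id ℂ B - P)) < ENNReal.ofReal σ)
    {F₁ F₂ : Type*} [NormedAddCommGroup F₁] [NormedSpace ℂ F₁]
    [NormedAddCommGroup F₂] [NormedSpace ℂ F₂]
    (j₁ : F₁ →ₗ[ℂ] (X → ℂ)) (j₂ : F₂ →ₗ[ℂ] (X → ℂ))
    (Φ₁ : F₁ →L[ℂ] B) (Φ₂ : F₂ →L[ℂ] (B →L[ℂ] ℂ))
    (hcorr : ∀ (n : ℕ) (ψ₁ : F₁) (ψ₂ : F₂),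
      (∫ x, j₁ ψ₁ x * j₂ ψ₂ (T^[n] x) ∂μ) = Φ₂ ψ₂ ((L ^ n) (Φ₁ ψ₁))) :
    ∃ C > 0, ∀ (n : ℕ) (ψ₁ : F₁) (ψ₂ : F₂),
      ‖(∫ x, j₁ ψ₁ x * j₂ ψ₂ (T^[n] x) ∂μ) - Φ₂ ψ₂ ((L ^ n) (P (Φ₁ ψ₁)))‖
        ≤ C * σ ^ n * ‖ψ₁‖ * ‖ψ₂‖ := by
  set Q : B →L[ℂ] B := 1 - P
  have hQ : IsIdempotentElem Q := IsIdempotentElem.one_sub hPP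
  have hLQ : Commute L Q := (Commute.one_right L).sub_right hcomm
  obtain ⟨C₀, hC₀, hpow⟩ := exists_norm_pow_le_of_spectralRadius_lt (a := L * Q) hspec
  have hσ : 0 < σ := pos_of_spectralRadius_lt hspec
  refine ⟨C₀ * (‖Φ₂‖ * ‖Q‖ * ‖Φ₁‖ + 1), by positivity, fun n ψ₁ ψ₂ => ?_⟩
  have herror : (L ^ n) (Φ₁ ψ₁) - (L ^ n) (P (Φ₁ ψ₁)) = ((L * Q) ^ n * Q) (Φ₁ ψ₁) := by
    rw [hQ.mul_pow_mul_of_commute hLQ, mul_sub, mul_one]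
    rfl
  calc ‖(∫ x, j₁ ψ₁ x * j₂ ψ₂ (T^[n] x) ∂μ) - Φ₂ ψ₂ ((L ^ n) (P (Φ₁ ψ₁)))‖
      = ‖Φ₂ ψ₂ (((L * Q) ^ n * Q) (Φ₁ ψ₁))‖ := by rw [hcorr, ← map_sub, herror]
    _ ≤ ‖Φ₂‖ * ‖ψ₂‖ * (‖(L * Q) ^ n‖ * ‖Q‖ * (‖Φ₁‖ * ‖ψ₁‖)) := by
        refine (Φ₂.le_opNorm₂ _ _).trans ?_
        gcongr
        exact ContinuousLinearMap.le_of_opNorm_le_of_le _ (norm_mul_le _ _) (Φ₁.le_opNorm ψ₁)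
    _ ≤ ‖Φ₂‖ * ‖ψ₂‖ * (C₀ * σ ^ n * ‖Q‖ * (‖Φ₁‖ * ‖ψ₁‖)) := by gcongr; exact hpow n
    _ = C₀ * (‖Φ₂‖ * ‖Q‖ * ‖Φ₁‖) * σ ^ n * ‖ψ₁‖ * ‖ψ₂‖ := by ring
    _ ≤ C₀ * (‖Φ₂‖ * ‖Q‖ * ‖Φ₁‖ + 1) * σ ^ n * ‖ψ₁‖ * ‖ψ₂‖ := by gcongr; linarith

/-- If the correlations of a measure-preserving-type system are computed by
a bounded operator `L` on a complex Banach space `B` together with a finite-rank projection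
`P` commuting with `L` such that `L ∘ (Id − P)` has spectral radius `< σ`, then the
correlations are described by the finite-dimensional part `Lⁿ P` up to an error
`C σⁿ ‖ψ₁‖ ‖ψ₂‖`. -/
theorem stmt1 {X : Type*} [MeasurableSpace X] (μ : Measure X) [IsFiniteMeasure μ]
    (T : X → X) (hT : Measurable T)
    {B : Type*} [NormedAddCommGroup B] [NormedSpace ℂ B] [CompleteSpace B]
    (L P : B →L[ℂ] B) (hPP : P ∘L P = P)
    (hfin : FiniteDimensional ℂ (LinearMap.range (P : B →ₗ[ℂ] B)))
    (hcomm : L ∘L P = P ∘L L)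
    (σ : ℝ) (hσ : 0 < σ)
    (hspec : spectralRadius ℂ (L ∘L (ContinuousLinearMap.id ℂ B - P)) < ENNReal.ofReal σ)
    {F₁ F₂ : Type*} [NormedAddCommGroup F₁] [NormedSpace ℂ F₁]
    [NormedAddCommGroup F₂] [NormedSpace ℂ F₂]
    (j₁ : F₁ →ₗ[ℂ] (X → ℂ)) (j₂ : F₂ →ₗ[ℂ] (X → ℂ))
    (Φ₁ : F₁ →L[ℂ] B) (Φ₂ : F₂ →L[ℂ] (B →L[ℂ] ℂ))
    (hint : ∀ (n : ℕ) (ψ₁ : F₁) (ψ₂ : F₂),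
      Integrable (fun x => j₁ ψ₁ x * j₂ ψ₂ (T^[n] x)) μ)
    (hcorr : ∀ (n : ℕ) (ψ₁ : F₁) (ψ₂ : F₂),
      (∫ x, j₁ ψ₁ x * j₂ ψ₂ (T^[n] x) ∂μ) = Φ₂ ψ₂ ((L ^ n) (Φ₁ ψ₁))) :
    ∃ C > 0, ∀ (n : ℕ) (ψ₁ : F₁) (ψ₂ : F₂),
      ‖(∫ x, j₁ ψ₁ x * j₂ ψ₂ (T^[n] x) ∂μ) - Φ₂ ψ₂ ((L ^ n) (P (Φ₁ ψ₁)))‖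
        ≤ C * σ ^ n * ‖ψ₁‖ * ‖ψ₂‖ :=
  stmt1_general μ T L P hPP hcomm σ hspec j₁ j₂ Φ₁ Φ₂ hcorr
end

section
/- Let B be a complex Banach space, L : B → B a bounded linear operator, and ρ > 0. Assume there exists C > 0 such that ‖Lⁿ‖ ≤ C ρⁿ for all n ∈ ℕ. Then for every λ ∈ ℂ with |λ| = ρ one has ker((L − λ·Id)²) = ker(L − λ·Id); that is, no eigenvalue of modulus ρ admits a nontrivial Jordan block. -/
/-!
If `(L - λ)² x = 0` and `y = (L - λ) x`, then `L^(n+1) x = λ^(n+1) x + (n+1) λⁿ y`. Taking norms,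
`(n+1) ρⁿ ‖y‖ ≤ (C+1) ρ^(n+1) ‖x‖`, so `(n+1) ‖y‖` stays bounded as `n → ∞` and `y = 0`:
a Jordan block of size two would make `‖Lⁿ‖ / ρⁿ` grow linearly.
-/

open Module End

theorem Module.End.pow_succ_apply_of_mem_genEigenspace_two {R M : Type*} [CommRing R]
    [AddCommGroup M] [Module R M] {f : End R M} {μ : R} {x : M}
    (hx : x ∈ f.genEigenspace μ 2) (n : ℕ) :
    (f ^ (n + 1)) x = μ ^ (n + 1) • x + ((n + 1) * μ ^ n) • (f x - μ • x) := by
  set y := f x - μ • x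
  have hfx : f x = μ • x + y := by simp [y]
  have hfy : f y = μ • y := by
    rw [← Nat.cast_ofNat, mem_genEigenspace_nat, LinearMap.mem_ker, sq] at hx
    rw [← sub_eq_zero, ← hx]
    simp [y]
  induction n with
  | zero => simp [hfx]
  | succ n ih =>
    rw [pow_succ', mul_apply, ih, map_add, map_smul, map_smul, hfx, hfy]
    push_cast
    module

theorem ContinuousLinearMap.genEigenspace_two_eq_eigenspace_of_norm_pow_le {𝕜 E : Type*}
    [RCLike 𝕜] [NormedAddCommGroup E] [NormedSpace 𝕜 E] {L : E →L[𝕜] E} {C ρ : ℝ} (hρ : 0 < ρ)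
    (hL : ∀ n : ℕ, ‖L ^ n‖ ≤ C * ρ ^ n) {μ : 𝕜} (hμ : ‖μ‖ = ρ) :
    genEigenspace (L : E →ₗ[𝕜] E) μ 2 = eigenspace (L : E →ₗ[𝕜] E) μ := by
  refine le_antisymm (fun x hx ↦ ?_) ((genEigenspace _ μ).monotone (by norm_num))
  set y := L x - μ • x
  have hpow : ∀ n : ℕ, (L ^ (n + 1)) x - μ ^ (n + 1) • x = ((n + 1) * μ ^ n : 𝕜) • y := by
    intro n
    have := pow_succ_apply_of_mem_genEigenspace_two hx n
    rw [← toLinearMap_pow] at this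
    simp only [coe_coe] at this
    rw [this, add_sub_cancel_left]
  have hbound : ∀ n : ℕ, (n + 1) * ρ ^ n * ‖y‖ ≤ (C + 1) * ρ ^ (n + 1) * ‖x‖ := fun n ↦
    calc (n + 1) * ρ ^ n * ‖y‖ = ‖(L ^ (n + 1)) x - μ ^ (n + 1) • x‖ := by
          rw [hpow, norm_smul, norm_mul, norm_pow, hμ]
          norm_cast
      _ ≤ ‖L ^ (n + 1)‖ * ‖x‖ + ρ ^ (n + 1) * ‖x‖ := by
          grw [norm_sub_le, le_opNorm, norm_smul, norm_pow μ, hμ]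
      _ ≤ (C + 1) * ρ ^ (n + 1) * ‖x‖ := by
          grw [hL]
          linarith
  have hy : ∀ n : ℕ, (n + 1) * ‖y‖ ≤ (C + 1) * ρ * ‖x‖ := by
    intro n
    have := hbound n
    rw [pow_succ] at this
    nlinarith [pow_pos hρ n]
  have hy0 : y = 0 := by
    by_contra hne
    obtain ⟨n, hn⟩ := exists_nat_gt ((C + 1) * ρ * ‖x‖ / ‖y‖)
    rw [div_lt_iff₀ (norm_pos_iff.mpr hne)] at hn
    linarith [hy n, norm_nonneg y]
  exact mem_eigenspace_iff.mpr (sub_eq_zero.mp hy0)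

theorem stmt2_general {B : Type*} [NormedAddCommGroup B] [NormedSpace ℂ B]
    (L : B →L[ℂ] B) (ρ : ℝ) (hρ : 0 < ρ)
    (h : ∃ C > 0, ∀ n : ℕ, ‖L ^ n‖ ≤ C * ρ ^ n) :
    ∀ lam : ℂ, ‖lam‖ = ρ →
      LinearMap.ker (((L - lam • (1 : B →L[ℂ] B)) ^ 2 : B →L[ℂ] B) : B →ₗ[ℂ] B)
        = LinearMap.ker ((L - lam • (1 : B →L[ℂ] B) : B →L[ℂ] B) : B →ₗ[ℂ] B) := by
  obtain ⟨C, -, hC⟩ := h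
  intro lam hlam
  have hker := ContinuousLinearMap.genEigenspace_two_eq_eigenspace_of_norm_pow_le hρ hC hlam
  rw [← Nat.cast_ofNat, genEigenspace_nat, eigenspace_def] at hker
  simpa using hker

/-- If a bounded operator `L` on a complex Banach space satisfies
`‖Lⁿ‖ ≤ C ρⁿ` for all `n`, then no eigenvalue of modulus `ρ` admits a nontrivial Jordan
block: `ker((L − λ·Id)²) = ker(L − λ·Id)` whenever `|λ| = ρ`. -/
theorem stmt2 {B : Type*} [NormedAddCommGroup B] [NormedSpace ℂ B] [CompleteSpace B]
    (L : B →L[ℂ] B) (ρ : ℝ) (hρ : 0 < ρ)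
    (h : ∃ C > 0, ∀ n : ℕ, ‖L ^ n‖ ≤ C * ρ ^ n) :
    ∀ lam : ℂ, ‖lam‖ = ρ →
      LinearMap.ker (((L - lam • (1 : B →L[ℂ] B)) ^ 2 : B →L[ℂ] B) : B →ₗ[ℂ] B)
        = LinearMap.ker ((L - lam • (1 : B →L[ℂ] B) : B →L[ℂ] B) : B →ₗ[ℂ] B) :=
  stmt2_general L ρ hρ h
end

section
/- Let X be a compact topological space and let L be a bounded linear operator on the Banach space C(X, ℝ) of real-valued continuous functions with the supremum norm, which is positive in the sense that f ≥ 0 pointwise implies Lf ≥ 0 pointwise. Assume there exist ρ > 0 and g ∈ C(X, ℝ) with g(x) > 0 for every x ∈ X and Lg = ρ·g. Then there exists C > 0 such that ‖Lⁿ f‖_∞ ≤ C ρⁿ ‖f‖_∞ for all n ∈ ℕ and all f ∈ C(X, ℝ); in particular ker((L − ρ·Id)²) = ker(L − ρ·Id), i.e. the eigenvalue ρ has no nontrivial Jordan block. -/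
/-!
Since `g` is bounded below by some `m > 0`, every `f` satisfies `|f| ≤ (‖f‖ / m) • g`. Positivity
of `Lⁿ` and `Lⁿ g = ρⁿ g` turn this into `|Lⁿ f| ≤ (‖f‖ / m) ρⁿ g`, whence
`‖Lⁿ f‖ ≤ (‖g‖ / m) ρⁿ ‖f‖`. If `(L - ρ)² f = 0` and `h = (L - ρ) f`, then
`Lⁿ⁺¹ f = ρⁿ⁺¹ f + (n + 1) ρⁿ h`, so `(n + 1) ‖h‖` stays bounded and `h = 0`.
-/

open ContinuousLinearMap

section Powers

variable {R M : Type*} [CommSemiring R] [TopologicalSpace M] [AddCommMonoid M] [Module R M]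

theorem ContinuousLinearMap.pow_apply_of_apply_eq_smul {T : M →L[R] M} {ρ : R} {g : M}
    (hg : T g = ρ • g) (n : ℕ) : (T ^ n) g = ρ ^ n • g := by
  induction n with
  | zero => simp
  | succ n ih => rw [pow_succ', mul_apply_eq_comp, ih, map_smul, hg, smul_smul, ← pow_succ]

theorem ContinuousLinearMap.pow_succ_apply_of_apply_eq_smul_add {T : M →L[R] M} {ρ : R}
    {f h : M} (hh : T h = ρ • h) (hf : T f = ρ • f + h) (n : ℕ) :
    (T ^ (n + 1)) f = ρ ^ (n + 1) • f + ((n + 1) * ρ ^ n) • h := by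
  induction n with
  | zero => simpa using hf
  | succ n ih =>
    rw [pow_succ', mul_apply_eq_comp, ih, map_add, map_smul, map_smul, hf, hh]
    push_cast
    module

end Powers

theorem abs_map_le_map_of_abs_le {E F 𝓕 : Type*} [AddCommGroup E] [Lattice E]
    [AddCommGroup F] [Lattice F] [FunLike 𝓕 E F] [AddMonoidHomClass 𝓕 E F] {φ : 𝓕}
    (hφ : Monotone φ) {f g : E} (h : |f| ≤ g) : |φ f| ≤ φ g :=
  abs_le'.2 ⟨hφ (abs_le'.1 h).1, (map_neg φ f).symm.trans_le (hφ (abs_le'.1 h).2)⟩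

namespace ContinuousMap

variable {X : Type*} [TopologicalSpace X] [CompactSpace X]

theorem abs_le_norm_div_smul {g : C(X, ℝ)} {m : ℝ} (hm : 0 < m) (hmg : ∀ x, m ≤ g x)
    (f : C(X, ℝ)) : |f| ≤ (‖f‖ / m) • g := fun x => by
  calc |f x| ≤ ‖f‖ := f.norm_coe_le_norm x
    _ = ‖f‖ / m * m := by field_simp
    _ ≤ ‖f‖ / m * g x := by gcongr; exact hmg x

theorem norm_le_mul_norm_of_abs_le_smul {f g : C(X, ℝ)} {c : ℝ} (hc : 0 ≤ c) (h : |f| ≤ c • g) :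
    ‖f‖ ≤ c * ‖g‖ :=
  (f.norm_le (by positivity)).2 fun x =>
    calc ‖f x‖ = |f| x := rfl
      _ ≤ c * g x := h x
      _ ≤ c * ‖g‖ := by gcongr; exact (le_abs_self _).trans (g.norm_coe_le_norm x)

theorem exists_pos_le_of_forall_pos {g : C(X, ℝ)} (hg : ∀ x, 0 < g x) :
    ∃ m > 0, ∀ x, m ≤ g x := by
  obtain ⟨m, hm, hmg⟩ := isCompact_univ.exists_forall_le' g.continuous.continuousOn
    fun x _ => hg x
  exact ⟨m, hm, fun x => hmg x trivial⟩

theorem norm_pow_apply_le_of_monotone {L : C(X, ℝ) →L[ℝ] C(X, ℝ)} (hL : Monotone L)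
    {ρ : ℝ} (hρ : 0 ≤ ρ) {g : C(X, ℝ)} (hLg : L g = ρ • g) {m : ℝ} (hm : 0 < m)
    (hmg : ∀ x, m ≤ g x) (n : ℕ) (f : C(X, ℝ)) : ‖(L ^ n) f‖ ≤ ‖g‖ / m * ρ ^ n * ‖f‖ := by
  have hLn : Monotone (L ^ n) := FunLike.coe_pow_eq_iterate L n ▸ hL.iterate n
  have hLng : (L ^ n) ((‖f‖ / m) • g) = (‖f‖ / m * ρ ^ n) • g := by
    rw [map_smul, pow_apply_of_apply_eq_smul hLg, smul_smul]
  have hdom : |(L ^ n) f| ≤ (‖f‖ / m * ρ ^ n) • g :=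
    hLng ▸ abs_map_le_map_of_abs_le hLn (abs_le_norm_div_smul hm hmg f)
  calc ‖(L ^ n) f‖ ≤ ‖f‖ / m * ρ ^ n * ‖g‖ :=
        norm_le_mul_norm_of_abs_le_smul (by positivity) hdom
    _ = ‖g‖ / m * ρ ^ n * ‖f‖ := by ring

end ContinuousMap

section JordanBlock

variable {𝕜 E : Type*} [RCLike 𝕜] [NormedAddCommGroup E] [NormedSpace 𝕜 E]

theorem eq_zero_of_forall_succ_mul_norm_le {h : E} {B : ℝ}
    (hB : ∀ n : ℕ, ((n : ℝ) + 1) * ‖h‖ ≤ B) : h = 0 := by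
  by_contra hne
  have hpos : 0 < ‖h‖ := norm_pos_iff.2 hne
  obtain ⟨n, hn⟩ := exists_nat_gt (B / ‖h‖)
  have : B < ((n : ℝ) + 1) * ‖h‖ := by
    rw [div_lt_iff₀ hpos] at hn
    linarith
  exact (hB n).not_gt this

theorem ContinuousLinearMap.ker_sq_sub_smul_one_eq_ker {T : E →L[𝕜] E} {ρ : 𝕜} (hρ : ρ ≠ 0)
    {C : ℝ} (hT : ∀ (n : ℕ) (f : E), ‖(T ^ n) f‖ ≤ C * ‖ρ‖ ^ n * ‖f‖) :
    LinearMap.ker (((T - ρ • 1) ^ 2 : E →L[𝕜] E) : E →ₗ[𝕜] E) =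
      LinearMap.ker ((T - ρ • 1 : E →L[𝕜] E) : E →ₗ[𝕜] E) := by
  refine le_antisymm (fun f hf => ?_) (fun f hf => ?_)
  · set h := (T - ρ • 1) f
    have hh : T h = ρ • h := by
      rw [LinearMap.mem_ker, coe_coe, sq, mul_apply_eq_comp] at hf
      change (T - ρ • 1) h = 0 at hf
      simpa only [sub_apply, smul_apply, one_apply_eq_self, sub_eq_zero] using hf
    have hTf : T f = ρ • f + h := by simp [h]
    refine eq_zero_of_forall_succ_mul_norm_le (B := (C + 1) * ‖ρ‖ * ‖f‖) fun n => ?_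
    have hnorm : ‖(n : 𝕜) + 1‖ = n + 1 := by exact_mod_cast RCLike.norm_natCast (K := 𝕜) (n + 1)
    refine le_of_mul_le_mul_right ?_ (pow_pos (norm_pos_iff.2 hρ) n)
    calc ((n : ℝ) + 1) * ‖h‖ * ‖ρ‖ ^ n = ‖((n + 1) * ρ ^ n) • h‖ := by
          rw [norm_smul, norm_mul, norm_pow, hnorm]; ring
      _ = ‖(T ^ (n + 1)) f - ρ ^ (n + 1) • f‖ := by
          rw [pow_succ_apply_of_apply_eq_smul_add hh hTf, add_sub_cancel_left]
      _ ≤ ‖(T ^ (n + 1)) f‖ + ‖ρ ^ (n + 1) • f‖ := norm_sub_le _ _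
      _ ≤ C * ‖ρ‖ ^ (n + 1) * ‖f‖ + ‖ρ‖ ^ (n + 1) * ‖f‖ := by
          rw [norm_smul, norm_pow]; gcongr; exact hT _ _
      _ = (C + 1) * ‖ρ‖ * ‖f‖ * ‖ρ‖ ^ n := by ring
  · rw [LinearMap.mem_ker, coe_coe] at hf ⊢
    rw [sq, mul_apply_eq_comp, hf, map_zero]

end JordanBlock

/-- A positive bounded operator on `C(X, ℝ)` (`X` compact) admitting a
strictly positive eigenfunction `g` with eigenvalue `ρ > 0` satisfies
`‖Lⁿ f‖_∞ ≤ C ρⁿ ‖f‖_∞`; in particular the eigenvalue `ρ` has no nontrivial Jordan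
block. -/
theorem stmt3 {X : Type*} [TopologicalSpace X] [CompactSpace X]
    (L : C(X, ℝ) →L[ℝ] C(X, ℝ))
    (hpos : ∀ f : C(X, ℝ), (∀ x, 0 ≤ f x) → ∀ x, 0 ≤ L f x)
    (ρ : ℝ) (hρ : 0 < ρ) (g : C(X, ℝ)) (hg : ∀ x, 0 < g x)
    (hLg : L g = ρ • g) :
    (∃ C > 0, ∀ (n : ℕ) (f : C(X, ℝ)), ‖(L ^ n) f‖ ≤ C * ρ ^ n * ‖f‖) ∧
      LinearMap.ker (((L - ρ • (1 : C(X, ℝ) →L[ℝ] C(X, ℝ))) ^ 2 : C(X, ℝ) →L[ℝ] C(X, ℝ)) : C(X, ℝ) →ₗ[ℝ] C(X, ℝ))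
        = LinearMap.ker ((L - ρ • (1 : C(X, ℝ) →L[ℝ] C(X, ℝ)) : C(X, ℝ) →L[ℝ] C(X, ℝ)) : C(X, ℝ) →ₗ[ℝ] C(X, ℝ)) := by
  have hmono : Monotone L := (monotone_iff_map_nonneg L).2 fun f hf => hpos f hf
  obtain ⟨m, hm, hmg⟩ := ContinuousMap.exists_pos_le_of_forall_pos hg
  have hbound : ∃ C > 0, ∀ (n : ℕ) (f : C(X, ℝ)), ‖(L ^ n) f‖ ≤ C * ρ ^ n * ‖f‖ :=
    ⟨‖g‖ / m + 1, by positivity, fun n f =>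
      (ContinuousMap.norm_pow_apply_le_of_monotone hmono hρ.le hLg hm hmg n f).trans
        (by gcongr; linarith)⟩
  refine ⟨hbound, ?_⟩
  obtain ⟨C, -, hC⟩ := hbound
  refine ker_sq_sub_smul_one_eq_ker hρ.ne' (C := C) fun n f => ?_
  rw [Real.norm_of_nonneg hρ.le]
  exact hC n f
end

section
/- Let X be a topological space, T : X → X a homeomorphism, U ⊆ X an open set, V ⊆ X a set whose closure is compact and contained in U, and O ⊆ X an open set containing Λ := ⋂_{n ∈ ℤ} Tⁿ(U). Then there exists L ∈ ℕ such that for every n ≥ 2L + 1 and every x ∈ X, if Tⁱx ∈ V for all integers 0 ≤ i ≤ n − 1, then Tⁱx ∈ O for all integers L ≤ i ≤ n − 1 − L. -/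
/-!
A point of `K = closure V` lying outside the open set `O` misses some `Tᵐ K`, since
`⋂ₘ Tᵐ K ⊆ Λ ⊆ O`. The sets `Tᵐ K` are closed, so by compactness of `K \ O` finitely many of
them, say with `|m| ≤ L`, already have no common point in `K \ O`. If an orbit segment stays in
`V` for `n` steps, then at every time `i` at distance at least `L` from both ends, `Tⁱ x`
lies in `Tᵐ K` for all `|m| ≤ L`, hence in `O`.
-/

open Set

theorem IsCompact.exists_finset_inter_biInter_subset {X ι : Type*} [TopologicalSpace X]
    {K O : Set X} {Z : ι → Set X} (hK : IsCompact K) (hO : IsOpen O)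
    (hZ : ∀ i, IsClosed (Z i)) (h : K ∩ ⋂ i, Z i ⊆ O) :
    ∃ t : Finset ι, K ∩ ⋂ i ∈ t, Z i ⊆ O := by
  have hempty : K \ O ∩ ⋂ i, Z i = ∅ :=
    eq_empty_of_forall_notMem fun y hy => hy.1.2 (h ⟨hy.1.1, hy.2⟩)
  obtain ⟨t, ht⟩ := (hK.diff hO).elim_finite_subfamily_closed Z hZ hempty
  exact ⟨t, fun y hy => by_contra fun hyO => ht.subset ⟨⟨hy.1, hyO⟩, hy.2⟩⟩

theorem IsCompact.exists_nat_inter_biInter_natAbs_le_subset {X : Type*} [TopologicalSpace X]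
    {K O : Set X} {Z : ℤ → Set X} (hK : IsCompact K) (hO : IsOpen O)
    (hZ : ∀ m, IsClosed (Z m)) (h : K ∩ ⋂ m, Z m ⊆ O) :
    ∃ L : ℕ, K ∩ ⋂ (m : ℤ) (_ : m.natAbs ≤ L), Z m ⊆ O := by
  obtain ⟨t, ht⟩ := hK.exists_finset_inter_biInter_subset hO hZ h
  refine ⟨t.sup Int.natAbs, fun y hy => ht ⟨hy.1, ?_⟩⟩
  exact mem_iInter₂.2 fun m hm => mem_iInter₂.1 hy.2 m (Finset.le_sup hm)

namespace Equiv.Perm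

theorem iterate_mem_zpow_image {α : Type*} (f : Perm α) {K : Set α} {x : α} {i j : ℕ} {m : ℤ}
    (hij : (i : ℤ) = m + j) (hj : f^[j] x ∈ K) : f^[i] x ∈ (f ^ m) '' K := by
  refine ⟨f^[j] x, hj, ?_⟩
  rw [iterate_eq_pow, iterate_eq_pow, ← mul_apply, ← zpow_natCast, ← zpow_natCast, ← zpow_add,
    hij]

theorem iterate_mem_zpow_image_of_forall_iterate_mem {α : Type*} (f : Perm α) {K : Set α}
    {x : α} {n L i : ℕ} (hx : ∀ j ≤ n - 1, f^[j] x ∈ K) (hLi : L ≤ i) (hin : i ≤ n - 1 - L)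
    {m : ℤ} (hm : m.natAbs ≤ L) : f^[i] x ∈ (f ^ m) '' K :=
  f.iterate_mem_zpow_image (j := (i - m).toNat) (by omega) (hx _ (by omega))

end Equiv.Perm

namespace Homeomorph

variable {X : Type*} [TopologicalSpace X]

def toPermHom : (X ≃ₜ X) →* Equiv.Perm X where
  toFun := Homeomorph.toEquiv
  map_one' := rfl
  map_mul' _ _ := rfl

theorem toEquiv_zpow (T : X ≃ₜ X) (m : ℤ) : T.toEquiv ^ m = (T ^ m).toEquiv :=
  (map_zpow toPermHom T m).symm

theorem isClosed_toEquiv_zpow_image (T : X ≃ₜ X) (m : ℤ) {K : Set X} (hK : IsClosed K) :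
    IsClosed ((T.toEquiv ^ m) '' K) := by
  rw [toEquiv_zpow]
  exact (T ^ m).isClosed_image.2 hK

end Homeomorph

theorem stmt4_general {X : Type*} [TopologicalSpace X] (T : X ≃ₜ X)
    (U : Set X)
    (V : Set X) (hVc : IsCompact (closure V)) (hVU : closure V ⊆ U)
    (O : Set X) (hO : IsOpen O)
    (hΛ : (⋂ n : ℤ, (T.toEquiv ^ n) '' U) ⊆ O) :
    ∃ L : ℕ, ∀ n : ℕ, 2 * L + 1 ≤ n → ∀ x : X,
      (∀ i : ℕ, i ≤ n - 1 → (⇑T)^[i] x ∈ V) →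
      ∀ i : ℕ, L ≤ i → i ≤ n - 1 - L → (⇑T)^[i] x ∈ O := by
  have hΛK : closure V ∩ ⋂ m : ℤ, (T.toEquiv ^ m) '' closure V ⊆ O := fun y hy =>
    hΛ <| mem_iInter.2 fun m => image_mono hVU (mem_iInter.1 hy.2 m)
  obtain ⟨L, hL⟩ := hVc.exists_nat_inter_biInter_natAbs_le_subset hO
    (fun m => T.isClosed_toEquiv_zpow_image m isClosed_closure) hΛK
  refine ⟨L, fun n _ x hx i hLi hin => hL ⟨subset_closure (hx i (by omega)), ?_⟩⟩
  exact mem_iInter₂.2 fun m hm => Equiv.Perm.iterate_mem_zpow_image_of_forall_iterate_mem _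
    (fun j hj => subset_closure (hx j hj)) hLi hin hm

/-- For a homeomorphism `T` of `X`, an open set `U`, a set `V` whose
closure is compact and contained in `U`, and an open set `O` containing
`Λ = ⋂_{n ∈ ℤ} Tⁿ(U)`, there is `L ∈ ℕ` such that any orbit segment of length `n ≥ 2L+1`
staying in `V` must lie in `O` at all times `i` with `L ≤ i ≤ n − 1 − L`. -/
theorem stmt4 {X : Type*} [TopologicalSpace X] (T : X ≃ₜ X)
    (U : Set X) (hU : IsOpen U)
    (V : Set X) (hVc : IsCompact (closure V)) (hVU : closure V ⊆ U)
    (O : Set X) (hO : IsOpen O)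
    (hΛ : (⋂ n : ℤ, (T.toEquiv ^ n) '' U) ⊆ O) :
    ∃ L : ℕ, ∀ n : ℕ, 2 * L + 1 ≤ n → ∀ x : X,
      (∀ i : ℕ, i ≤ n - 1 → (⇑T)^[i] x ∈ V) →
      ∀ i : ℕ, L ≤ i → i ≤ n - 1 - L → (⇑T)^[i] x ∈ O :=
  stmt4_general T U V hVc hVU O hO hΛ
end

section
/- Let V be a complex vector space, L : V → V a linear map, and N₁, N₂ seminorms on V with N₂(x) ≤ N₁(x) for all x. Let ρ > 0, σ ∈ (0, 1), d ∈ ℕ, an integer N ≥ 1 and constants K, C', C₁ > 0 be such that for all x ∈ V: (i) N₁(Lx) ≤ K N₁(x); (ii) N₁(L^N x) ≤ ρ^N σ^N N₁(x) + C' N₂(x); (iii) N₂(Lⁿ x) ≤ C₁ (n+1)^d ρⁿ N₂(x) for all n ∈ ℕ. Then there exists a constant C > 0 such that for all n ∈ ℕ and all x ∈ V, N₁(Lⁿ x) ≤ C ρⁿ σⁿ N₁(x) + C (n+1)^d ρⁿ N₂(x). -/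
/-- An abstract Lasota–Yorke iteration: from a one-step bound, an `N`-step
contraction `N₁(L^N x) ≤ ρ^N σ^N N₁(x) + C' N₂(x)` and polynomial growth of `N₂` along
iterates, one deduces `N₁(Lⁿ x) ≤ C ρⁿ σⁿ N₁(x) + C (n+1)^d ρⁿ N₂(x)` for all `n`. -/
theorem stmt6 {V : Type*} [AddCommGroup V] [Module ℂ V]
    (L : V →ₗ[ℂ] V) (N₁ N₂ : Seminorm ℂ V) (hle : ∀ x, N₂ x ≤ N₁ x)
    (ρ σ : ℝ) (hρ : 0 < ρ) (hσ0 : 0 < σ) (hσ1 : σ < 1)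
    (d N : ℕ) (hN : 1 ≤ N)
    (K C' C₁ : ℝ) (hK : 0 < K) (hC' : 0 < C') (hC₁ : 0 < C₁)
    (h1 : ∀ x, N₁ (L x) ≤ K * N₁ x)
    (h2 : ∀ x, N₁ ((L ^ N) x) ≤ ρ ^ N * σ ^ N * N₁ x + C' * N₂ x)
    (h3 : ∀ (n : ℕ) (x : V), N₂ ((L ^ n) x) ≤ C₁ * ((n : ℝ) + 1) ^ d * ρ ^ n * N₂ x) :
    ∃ C > 0, ∀ (n : ℕ) (x : V),
      N₁ ((L ^ n) x) ≤ C * ρ ^ n * σ ^ n * N₁ x + C * ((n : ℝ) + 1) ^ d * ρ ^ n * N₂ x := by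
  have hσN : σ ^ N < 1 := pow_lt_one₀ hσ0.le hσ1 (Nat.one_le_iff_ne_zero.mp hN)
  have hσNpos : 0 < σ ^ N := pow_pos hσ0 N
  have hρN : 0 < ρ ^ N := pow_pos hρ N
  have h1σ : 0 < 1 - σ ^ N := by linarith
  obtain ⟨M, hM⟩ : ∃ M : ℝ, M = max 1 (K / (ρ * σ)) := ⟨_, rfl⟩
  have hM1 : (1:ℝ) ≤ M := hM ▸ le_max_left _ _
  have hM0 : 0 < M := lt_of_lt_of_le one_pos hM1
  have hKM : K ≤ M * (ρ * σ) := by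
    have h := le_max_right 1 (K / (ρ * σ))
    rw [div_le_iff₀ (mul_pos hρ hσ0)] at h
    rw [hM]
    exact h
  obtain ⟨A, hA⟩ : ∃ A : ℝ, A = M ^ N := ⟨_, rfl⟩
  obtain ⟨B, hB⟩ : ∃ B : ℝ, B = C' * C₁ / ρ ^ N := ⟨_, rfl⟩
  have hApos : 0 < A := hA ▸ pow_pos hM0 N
  have hBpos : 0 < B := hB ▸ div_pos (mul_pos hC' hC₁) hρN
  obtain ⟨C, hC⟩ : ∃ C : ℝ, C = A + B / (1 - σ ^ N) := ⟨_, rfl⟩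
  have hCpos : 0 < C := hC ▸ add_pos hApos (div_pos hBpos h1σ)
  have hAC : A ≤ C := by
    have h0 : 0 < B / (1 - σ ^ N) := div_pos hBpos h1σ
    rw [hC]; linarith
  have hBC : σ ^ N * C + B ≤ C := by
    have ht : B / (1 - σ ^ N) * (1 - σ ^ N) = B := div_mul_cancel₀ B h1σ.ne'
    rw [hC]
    nlinarith [mul_pos hApos h1σ, ht]
  have hBdef : C' * C₁ = B * ρ ^ N := by
    rw [hB]
    exact (div_mul_cancel₀ _ hρN.ne').symm
  refine ⟨C, hCpos, ?_⟩
  have hiter : ∀ (n : ℕ) (x : V), N₁ ((L ^ n) x) ≤ K ^ n * N₁ x := by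
    intro n
    induction n with
    | zero => intro x; simp
    | succ k ih =>
        intro x
        have hx : (L ^ (k + 1)) x = (L ^ k) (L x) := by
          rw [pow_succ, Module.End.mul_apply]
        calc N₁ ((L ^ (k + 1)) x) = N₁ ((L ^ k) (L x)) := by rw [hx]
          _ ≤ K ^ k * N₁ (L x) := ih (L x)
          _ ≤ K ^ k * (K * N₁ x) :=
              mul_le_mul_of_nonneg_left (h1 x) (pow_nonneg hK.le k)
          _ = K ^ (k + 1) * N₁ x := by ring
  intro n
  induction n using Nat.strong_induction_on with
  | _ n ih =>
    intro x
    by_cases hn : n < N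
    · -- base case
      have hMn : M ^ n ≤ A := by
        rw [hA]
        exact pow_le_pow_right₀ hM1 hn.le
      have hKn : K ^ n ≤ C * ρ ^ n * σ ^ n := by
        calc K ^ n ≤ (M * (ρ * σ)) ^ n := pow_le_pow_left₀ hK.le hKM n
          _ = M ^ n * ((ρ * σ) ^ n) := by rw [mul_pow]
          _ ≤ C * ((ρ * σ) ^ n) := by
              have : M ^ n ≤ C := le_trans hMn hAC
              exact mul_le_mul_of_nonneg_right this (pow_nonneg (mul_pos hρ hσ0).le n)
          _ = C * ρ ^ n * σ ^ n := by rw [mul_pow]; ring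
      have h0 : N₁ ((L ^ n) x) ≤ C * ρ ^ n * σ ^ n * N₁ x :=
        le_trans (hiter n x) (mul_le_mul_of_nonneg_right hKn (apply_nonneg N₁ x))
      have hnn : 0 ≤ C * ((n : ℝ) + 1) ^ d * ρ ^ n * N₂ x := by positivity
      linarith
    · -- inductive step
      push_neg at hn
      obtain ⟨m, rfl⟩ : ∃ m, n = m + N := ⟨n - N, (Nat.sub_add_cancel hn).symm⟩
      have hmlt : m < m + N := Nat.lt_add_of_pos_right hN
      have key : (L ^ (m + N)) x = (L ^ N) ((L ^ m) x) := by
        rw [add_comm m N, pow_add, Module.End.mul_apply]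
      have hpoly' : ((m : ℝ) + 1) ^ d ≤ (((m + N : ℕ) : ℝ) + 1) ^ d := by
        apply pow_le_pow_left₀ (by positivity)
        push_cast
        have : (1:ℝ) ≤ N := by exact_mod_cast hN
        linarith
      have hih := ih m hmlt x
      have hN2 := h3 m x
      have hN1x : 0 ≤ N₁ x := apply_nonneg N₁ x
      have hN2x : 0 ≤ N₂ x := apply_nonneg N₂ x
      have hρm : (0:ℝ) < ρ ^ m := pow_pos hρ m
      have hσm : (0:ℝ) < σ ^ m := pow_pos hσ0 m
      have hpm : (0:ℝ) ≤ ((m : ℝ) + 1) ^ d := by positivity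
      have hcoef : ρ ^ N * σ ^ N * (C * ((m : ℝ) + 1) ^ d * ρ ^ m)
          + C' * (C₁ * ((m : ℝ) + 1) ^ d * ρ ^ m)
          ≤ C * (((m + N : ℕ) : ℝ) + 1) ^ d * (ρ ^ m * ρ ^ N) := by
        have step1 : ρ ^ N * σ ^ N * (C * ((m : ℝ) + 1) ^ d * ρ ^ m)
            + C' * (C₁ * ((m : ℝ) + 1) ^ d * ρ ^ m)
            = (σ ^ N * C + B) * (((m : ℝ) + 1) ^ d * (ρ ^ m * ρ ^ N)) := by
          linear_combination ((m : ℝ) + 1) ^ d * ρ ^ m * hBdef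
        rw [step1]
        have h1' : (σ ^ N * C + B) * (((m : ℝ) + 1) ^ d * (ρ ^ m * ρ ^ N))
            ≤ C * (((m : ℝ) + 1) ^ d * (ρ ^ m * ρ ^ N)) :=
          mul_le_mul_of_nonneg_right hBC (by positivity)
        refine h1'.trans ?_
        rw [← mul_assoc]
        gcongr
      calc N₁ ((L ^ (m + N)) x) = N₁ ((L ^ N) ((L ^ m) x)) := by rw [key]
        _ ≤ ρ ^ N * σ ^ N * N₁ ((L ^ m) x) + C' * N₂ ((L ^ m) x) := h2 ((L ^ m) x)
        _ ≤ ρ ^ N * σ ^ N * (C * ρ ^ m * σ ^ m * N₁ x + C * ((m : ℝ) + 1) ^ d * ρ ^ m * N₂ x)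
              + C' * (C₁ * ((m : ℝ) + 1) ^ d * ρ ^ m * N₂ x) := by
            gcongr
        _ ≤ C * ρ ^ (m + N) * σ ^ (m + N) * N₁ x
              + C * (((m + N : ℕ) : ℝ) + 1) ^ d * ρ ^ (m + N) * N₂ x := by
            rw [pow_add, pow_add]
            have hc2 := mul_le_mul_of_nonneg_right hcoef hN2x
            nlinarith [hc2]
end

section
/- Let B be a complex Banach space, ρ > 0, κ ≥ 1 an integer, and γ₁, …, γ_M distinct complex numbers of modulus 1. Let S₁, …, S_M, N₁, …, N_M and R be bounded linear operators on B satisfying, for all i, j: SᵢSⱼ = δᵢⱼ Sᵢ; SᵢNⱼ = NⱼSᵢ = δᵢⱼ Nⱼ; NᵢNⱼ = δᵢⱼ Nᵢ²; Nᵢ^κ = 0; SᵢR = RSᵢ = NᵢR = RNᵢ = 0; and assume the spectral radius of R is strictly less than ρ. Set L := Σ_{i=1}^M (γᵢ ρ Sᵢ + Nᵢ) + R. Then for every γ ∈ ℂ with |γ| = 1, the sequence of operators n^{-κ} Σ_{k=0}^{n−1} γ^{-k} ρ^{-k} L^k converges in operator norm as n → ∞; the limit is 0 if γ ∉ {γ₁,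 …, γ_M}, while if γ = γᵢ the limit equals (1/κ!) (γᵢ ρ)^{1−κ} Nᵢ^{κ−1}, where for κ = 1 the operator Nᵢ^{κ−1} = Nᵢ⁰ is interpreted as the projection Sᵢ. -/
/-!
After rescaling by `(γ₀ρ)⁻¹`, the blocks `γᵢρ Sᵢ + Nᵢ` and `R` annihilate one another, so for
`k ≥ 1` the `k`-th power of the rescaled `L` is `Σᵢ zᵢᵏ Sᵢ (1 + Xᵢ)ᵏ + (γ₀ρ)⁻ᵏ Rᵏ` with
`zᵢ = γᵢ/γ₀` and `Xᵢ = (γᵢρ)⁻¹ Nᵢ`, and `(1 + Xᵢ)ᵏ = Σ_{m<κ} C(k,m) Xᵢᵐ`. Everything thus reduces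
to the scalar sums `s_m(n) = Σ_{k<n} C(k,m) zᵏ`. For `z = 1`, `s_m(n) = C(n, m+1) ~ n^{m+1}/(m+1)!`,
which survives division by `n^κ` only when `m = κ - 1`; for `z ≠ 1`, the recurrence
`(1 - z) s_{m+1}(n) = z s_m(n) - C(n, m+1) zⁿ` gives `s_m(n) = O(nᵐ)`. By Gelfand's formula
`Σ ‖Rᵏ‖/ρᵏ < ∞`, so the remainder does not contribute.
-/

open Filter Finset Topology
open scoped Nat

section Algebra

variable {R : Type*}

theorem add_pow_of_mul_eq_zero [Semiring R] {x y : R} (hxy : x * y = 0) (hyx : y * x = 0)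
    {k : ℕ} (hk : k ≠ 0) : (x + y) ^ k = x ^ k + y ^ k := by
  induction k, Nat.one_le_iff_ne_zero.2 hk using Nat.le_induction with
  | base => simp
  | succ k hk1 ih =>
    obtain ⟨j, rfl⟩ := Nat.exists_eq_add_one_of_ne_zero (Nat.one_le_iff_ne_zero.1 hk1)
    have hxky : x ^ (j + 1) * y = 0 := by rw [pow_succ, mul_assoc, hxy, mul_zero]
    have hykx : y ^ (j + 1) * x = 0 := by rw [pow_succ, mul_assoc, hyx, mul_zero]
    rw [pow_succ, ih (by omega), add_mul, mul_add, mul_add, hxky, hykx, add_zero, zero_add,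
      ← pow_succ, ← pow_succ]

theorem one_add_pow_eq_sum_range_of_pow_eq_zero [Semiring R] {X : R} {κ : ℕ} (hX : X ^ κ = 0)
    (k : ℕ) : (1 + X) ^ k = ∑ m ∈ range κ, (k.choose m : R) * X ^ m := by
  have hvanish : ∀ n, ∀ m ∈ range n, m ∉ range (min (k + 1) κ) →
      (k.choose m : R) * X ^ m = 0 := by
    intro n m _ hm
    rcases le_or_gt κ m with hκm | hmκ
    · rw [pow_eq_zero_of_le hκm hX, mul_zero]
    · have hkm : k < m := by simp at hm; omega
      rw [Nat.choose_eq_zero_of_lt hkm, Nat.cast_zero, zero_mul]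
  rw [add_comm, (Commute.one_right X).add_pow]
  simp_rw [one_pow, mul_one, ← Nat.cast_comm]
  rw [← sum_subset (range_subset_range.2 (min_le_right _ _)) (hvanish κ),
    ← sum_subset (range_subset_range.2 (min_le_left _ _)) (hvanish (k + 1))]

theorem Finset.sum_pow_of_mul_eq_zero [Semiring R] {ι : Type*} (s : Finset ι) {x : ι → R}
    (h : ∀ i ∈ s, ∀ j ∈ s, i ≠ j → x i * x j = 0) {k : ℕ} (hk : k ≠ 0) :
    (∑ i ∈ s, x i) ^ k = ∑ i ∈ s, x i ^ k := by
  classical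
  induction s using Finset.induction_on with
  | empty => simp [zero_pow hk]
  | insert a s ha ih =>
    have hs : ∀ i ∈ s, ∀ j ∈ s, i ≠ j → x i * x j = 0 := fun i hi j hj =>
      h i (mem_insert_of_mem hi) j (mem_insert_of_mem hj)
    have hne : ∀ j ∈ s, a ≠ j := fun j hj hja => ha (hja ▸ hj)
    rw [sum_insert ha, sum_insert ha, add_pow_of_mul_eq_zero _ _ hk, ih hs]
    · rw [mul_sum]
      exact sum_eq_zero fun j hj => h a (mem_insert_self a s) j (mem_insert_of_mem hj) (hne j hj)
    · rw [sum_mul]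
      exact sum_eq_zero fun j hj =>
        h j (mem_insert_of_mem hj) a (mem_insert_self a s) (hne j hj).symm

variable {𝕜 : Type*} [Field 𝕜] [Ring R] [Algebra 𝕜 R]

theorem smul_add_pow_of_isIdempotentElem {S N : R} (hS : IsIdempotentElem S) (hSN : S * N = N)
    (hNS : N * S = N) {a : 𝕜} (ha : a ≠ 0) {k : ℕ} (hk : k ≠ 0) :
    (a • S + N) ^ k = a ^ k • (S * (1 + a⁻¹ • N) ^ k) := by
  have hfactor : a • S + N = a • (S * (1 + a⁻¹ • N)) := by
    rw [mul_add, mul_one, mul_smul_comm, hSN, smul_add, smul_smul, mul_inv_cancel₀ ha, one_smul]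
  have hcomm : Commute S (1 + a⁻¹ • N) := by
    rw [Commute, SemiconjBy, mul_add, add_mul, mul_one, one_mul, mul_smul_comm, smul_mul_assoc,
      hSN, hNS]
  rw [hfactor, smul_pow, hcomm.mul_pow, hS.pow_eq hk]

theorem pow_sum_smul_add_add {ι : Type*} [Fintype ι] [DecidableEq ι] {a : ι → 𝕜}
    (ha : ∀ i, a i ≠ 0) {S N : ι → R} {T : R}
    (hSS : ∀ i j, S i * S j = if i = j then S i else 0)
    (hSN : ∀ i j, S i * N j = if i = j then N j else 0)
    (hNS : ∀ i j, N j * S i = if i = j then N j else 0)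
    (hNN : ∀ i j, N i * N j = if i = j then N i ^ 2 else 0)
    (hST : ∀ i, S i * T = 0) (hTS : ∀ i, T * S i = 0)
    (hNT : ∀ i, N i * T = 0) (hTN : ∀ i, T * N i = 0) {k : ℕ} (hk : k ≠ 0) :
    (∑ i, (a i • S i + N i) + T) ^ k = ∑ i, a i ^ k • (S i * (1 + (a i)⁻¹ • N i) ^ k) + T ^ k := by
  have horth : ∀ i ∈ univ, ∀ j ∈ univ, i ≠ j → (a i • S i + N i) * (a j • S j + N j) = 0 := by
    intro i _ j _ hij
    simp [add_mul, mul_add, hSS, hSN, hNS, hNN, hij, Ne.symm hij]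
  have hDT : (∑ i, (a i • S i + N i)) * T = 0 := by
    simp [sum_mul, add_mul, hST, hNT]
  have hTD : T * ∑ i, (a i • S i + N i) = 0 := by
    simp [mul_sum, mul_add, hTS, hTN]
  rw [add_pow_of_mul_eq_zero hDT hTD hk, sum_pow_of_mul_eq_zero _ horth hk]
  congr 1
  refine sum_congr rfl fun i _ => smul_add_pow_of_isIdempotentElem ?_ ?_ ?_ (ha i) hk
  · simpa [IsIdempotentElem] using hSS i i
  · simpa using hSN i i
  · simpa using hNS i i

end Algebra

section PartialSumDivPow

variable {E F : Type*} [NormedAddCommGroup E] [NormedSpace ℂ E] [NormedAddCommGroup F]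
  [NormedSpace ℂ F]

noncomputable def partialSumDivPow (κ : ℕ) (u : ℕ → E) (n : ℕ) : E :=
  (n : ℂ) ^ (-(κ : ℤ)) • ∑ k ∈ range n, u k

theorem partialSumDivPow_add (κ : ℕ) (u v : ℕ → E) :
    partialSumDivPow κ (fun k => u k + v k) = partialSumDivPow κ u + partialSumDivPow κ v := by
  ext n
  simp only [partialSumDivPow, sum_add_distrib, smul_add, Pi.add_apply]

theorem partialSumDivPow_sum {ι : Type*} (s : Finset ι) (κ : ℕ) (u : ι → ℕ → E) :
    partialSumDivPow κ (fun k => ∑ i ∈ s, u i k)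
      = fun n => ∑ i ∈ s, partialSumDivPow κ (u i) n := by
  ext n
  simp only [partialSumDivPow, smul_sum]
  rw [sum_comm]

theorem Filter.Tendsto.partialSumDivPow_map {κ : ℕ} {u : ℕ → E} {x : E}
    (hu : Tendsto (partialSumDivPow κ u) atTop (𝓝 x)) (f : E →L[ℂ] F) :
    Tendsto (partialSumDivPow κ fun k => f (u k)) atTop (𝓝 (f x)) := by
  have hmap : (partialSumDivPow κ fun k => f (u k)) = fun n => f (partialSumDivPow κ u n) := by
    ext n
    simp only [partialSumDivPow, map_smul, map_sum]
  rw [hmap]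
  exact (f.continuous.tendsto x).comp hu

theorem tendsto_partialSumDivPow_zero_of_norm_sum_le {κ m : ℕ} (hm : m < κ) {u : ℕ → E} {C : ℝ}
    (h : ∀ n, ‖∑ k ∈ range n, u k‖ ≤ C * (n + 1) ^ m) :
    Tendsto (partialSumDivPow κ u) atTop (𝓝 0) := by
  have hpow : Tendsto (fun n : ℕ => C * 2 ^ m * (n : ℝ) ^ ((m : ℤ) - κ)) atTop (𝓝 0) := by
    simpa using ((tendsto_zpow_atTop_zero (by omega)).comp tendsto_natCast_atTop_atTop).const_mul
      (C * 2 ^ m)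
  refine squeeze_zero_norm' ?_ hpow
  filter_upwards [eventually_ge_atTop 1] with n hn
  have hn0 : (0 : ℝ) < n := by exact_mod_cast hn
  have hn1 : (n : ℝ) + 1 ≤ 2 * n := by linarith [(Nat.one_le_cast (α := ℝ)).2 hn]
  have hC : 0 ≤ C := by simpa using h 0
  calc ‖partialSumDivPow κ u n‖ = (n : ℝ) ^ (-(κ : ℤ)) * ‖∑ k ∈ range n, u k‖ := by
        rw [partialSumDivPow, norm_smul, norm_zpow, Complex.norm_natCast]
    _ ≤ (n : ℝ) ^ (-(κ : ℤ)) * (C * (2 * n) ^ m) := by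
        gcongr
        exact (h n).trans (by gcongr)
    _ = C * 2 ^ m * (n : ℝ) ^ ((m : ℤ) - κ) := by
        rw [zpow_sub₀ hn0.ne', zpow_natCast, zpow_neg, mul_pow]
        ring

theorem tendsto_partialSumDivPow_zero_of_summable_norm {κ : ℕ} (hκ : κ ≠ 0) {u : ℕ → E}
    (hu : Summable fun k => ‖u k‖) : Tendsto (partialSumDivPow κ u) atTop (𝓝 0) :=
  tendsto_partialSumDivPow_zero_of_norm_sum_le (m := 0) (Nat.pos_of_ne_zero hκ) fun n => by
    simpa using (norm_sum_le _ _).trans (hu.sum_le_tsum (range n) fun k _ => norm_nonneg _)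

theorem Filter.Tendsto.partialSumDivPow_congr {κ : ℕ} (hκ : κ ≠ 0) {u v : ℕ → E} {x : E}
    (huv : ∀ k ≠ 0, u k = v k) (hu : Tendsto (partialSumDivPow κ u) atTop (𝓝 x)) :
    Tendsto (partialSumDivPow κ v) atTop (𝓝 x) := by
  have hdiff : Tendsto (partialSumDivPow κ fun k => v k - u k) atTop (𝓝 0) := by
    refine tendsto_partialSumDivPow_zero_of_summable_norm hκ
      (summable_of_ne_finset_zero (s := {0}) fun k hk => ?_)
    rw [huv k (by simpa using hk), sub_self, norm_zero]
  have h : Tendsto (partialSumDivPow κ u + partialSumDivPow κ fun k => v k - u k) atTop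
      (𝓝 (x + 0)) := hu.add hdiff
  simpa only [← partialSumDivPow_add, add_sub_cancel, add_zero] using h

end PartialSumDivPow

theorem Nat.sum_range_choose_eq_choose_succ (m n : ℕ) :
    ∑ k ∈ range n, k.choose m = n.choose (m + 1) := by
  induction n with
  | zero => simp
  | succ n ih => rw [sum_range_succ, ih, Nat.choose_succ_succ', add_comm]

theorem Nat.choose_le_succ_pow (n k : ℕ) : n.choose k ≤ (n + 1) ^ k :=
  (Nat.choose_le_pow n k).trans (Nat.pow_le_pow_left n.le_succ k)

theorem one_sub_mul_sum_range_choose_succ_mul_pow (z : ℂ) (m n : ℕ) :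
    (1 - z) * ∑ k ∈ range n, (k.choose (m + 1) : ℂ) * z ^ k
      = z * ∑ k ∈ range n, (k.choose m : ℂ) * z ^ k - (n.choose (m + 1) : ℂ) * z ^ n := by
  have hshift : ∑ k ∈ range (n + 1), (k.choose (m + 1) : ℂ) * z ^ k
      = z * ∑ k ∈ range n, ((k.choose m : ℂ) + k.choose (m + 1)) * z ^ k := by
    rw [sum_range_succ', mul_sum]
    simp only [Nat.choose_succ_succ', Nat.cast_add, Nat.choose_zero_succ, Nat.cast_zero, zero_mul,
      add_zero, pow_succ]
    exact sum_congr rfl fun k _ => by ring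
  rw [sum_range_succ] at hshift
  simp only [add_mul, sum_add_distrib] at hshift
  linear_combination hshift

theorem norm_sum_range_choose_mul_pow_le {z : ℂ} (hz : ‖z‖ ≤ 1) (hz1 : z ≠ 1) (m : ℕ) :
    ∃ C, ∀ n : ℕ, ‖∑ k ∈ range n, (k.choose m : ℂ) * z ^ k‖ ≤ C * (n + 1) ^ m := by
  have hδ : 0 < ‖1 - z‖ := norm_pos_iff.2 (sub_ne_zero.2 hz1.symm)
  induction m with
  | zero =>
    refine ⟨2 / ‖1 - z‖, fun n => ?_⟩
    simp only [Nat.choose_zero_right, Nat.cast_one, one_mul, pow_zero, mul_one]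
    rw [geom_sum_eq hz1, norm_div, norm_sub_rev z]
    gcongr
    calc ‖z ^ n - 1‖ ≤ ‖z‖ ^ n + 1 := by simpa using norm_sub_le (z ^ n) 1
      _ ≤ 2 := by linarith [pow_le_one₀ (norm_nonneg z) hz (n := n)]
  | succ m ih =>
    obtain ⟨C, hC⟩ := ih
    refine ⟨(C + 1) / ‖1 - z‖, fun n => ?_⟩
    have hn1 : (1 : ℝ) ≤ n + 1 := by linarith [n.cast_nonneg (α := ℝ)]
    rw [div_mul_eq_mul_div, le_div_iff₀ hδ, mul_comm, ← norm_mul,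
      one_sub_mul_sum_range_choose_succ_mul_pow]
    calc _ ≤ ‖z‖ * ‖∑ k ∈ range n, (k.choose m : ℂ) * z ^ k‖
          + (n.choose (m + 1) : ℝ) * ‖z‖ ^ n := by
          refine (norm_sub_le _ _).trans_eq ?_
          rw [norm_mul, norm_mul, norm_pow, Complex.norm_natCast]
      _ ≤ 1 * (C * (n + 1) ^ m) + ((n + 1) ^ (m + 1) : ℕ) * 1 := by
          gcongr
          · exact hC n
          · exact Nat.choose_le_succ_pow n (m + 1)
          · exact pow_le_one₀ (norm_nonneg z) hz
      _ ≤ (C + 1) * (n + 1) ^ (m + 1) := by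
          have hC0 : 0 ≤ C := by simpa using hC 0
          push_cast
          nlinarith [mul_le_mul_of_nonneg_left (pow_le_pow_right₀ hn1 (by omega : m ≤ m + 1)) hC0]

theorem tendsto_natCast_zpow_neg_mul_choose (j : ℕ) :
    Tendsto (fun n : ℕ => (n : ℂ) ^ (-(j : ℤ)) * n.choose j) atTop (𝓝 (j ! : ℂ)⁻¹) := by
  have hreal : Tendsto (fun n : ℕ => (n.choose j : ℝ) / n ^ j) atTop (𝓝 (j ! : ℝ)⁻¹) := by
    refine ((isEquivalent_choose j).div Asymptotics.IsEquivalent.refl).tendsto_nhds_iff.2 ?_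
    refine tendsto_const_nhds.congr' ?_
    filter_upwards [eventually_ne_atTop 0] with n hn
    simp only [Pi.div_apply]
    field_simp
  have hcomplex := (Complex.continuous_ofReal.tendsto _).comp hreal
  push_cast at hcomplex
  refine hcomplex.congr fun n => ?_
  simp [zpow_neg, div_eq_inv_mul]

theorem tendsto_partialSumDivPow_choose_mul_pow {z : ℂ} (hz : ‖z‖ ≤ 1) {m κ : ℕ} (hm : m < κ) :
    Tendsto (partialSumDivPow κ fun k => (k.choose m : ℂ) * z ^ k) atTop
      (𝓝 (if z = 1 ∧ m + 1 = κ then (κ ! : ℂ)⁻¹ else 0)) := by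
  by_cases hz1 : z = 1
  · subst hz1
    have hsum : ∀ n, ∑ k ∈ range n, (k.choose m : ℂ) * 1 ^ k = n.choose (m + 1) := fun n => by
      simp [← Nat.cast_sum, Nat.sum_range_choose_eq_choose_succ]
    rcases (Nat.succ_le_of_lt hm).eq_or_lt with rfl | hκ
    · rw [if_pos ⟨rfl, rfl⟩]
      refine (tendsto_natCast_zpow_neg_mul_choose (m + 1)).congr fun n => ?_
      rw [partialSumDivPow, hsum, smul_eq_mul]
    · rw [if_neg (by omega)]
      refine tendsto_partialSumDivPow_zero_of_norm_sum_le hκ (C := 1) fun n => ?_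
      rw [hsum, Complex.norm_natCast, one_mul]
      exact_mod_cast Nat.choose_le_succ_pow n (m + 1)
  · rw [if_neg (by tauto)]
    obtain ⟨C, hC⟩ := norm_sum_range_choose_mul_pow_le hz hz1 m
    exact tendsto_partialSumDivPow_zero_of_norm_sum_le hm hC

section NormedAlgebra

variable {A : Type*} [NormedRing A] [NormedAlgebra ℂ A]

theorem summable_norm_pow_div_pow_of_spectralRadius_lt [CompleteSpace A] {a : A} {ρ : ℝ}
    (h : spectralRadius ℂ a < ENNReal.ofReal ρ) : Summable fun k => ‖a ^ k‖ / ρ ^ k := by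
  obtain ⟨r, har, hrρ⟩ := exists_between h
  have hr : r.toReal < ρ := ENNReal.toReal_lt_of_lt_ofReal hrρ
  have hρ : 0 < ρ := r.toReal_nonneg.trans_lt hr
  have hbound : ∀ᶠ k : ℕ in atTop, ‖a ^ k‖ ≤ r.toReal ^ k := by
    filter_upwards [(spectrum.pow_norm_pow_one_div_tendsto_nhds_spectralRadius a)
      |>.eventually_lt_const har, eventually_ne_atTop 0] with k hk hk0
    have hroot : ‖a ^ k‖ ^ (1 / k : ℝ) < r.toReal :=
      (ENNReal.ofReal_lt_iff_lt_toReal (by positivity) hrρ.ne_top).1 hk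
    calc ‖a ^ k‖ = (‖a ^ k‖ ^ (1 / k : ℝ)) ^ k := by
          rw [one_div, Real.rpow_inv_natCast_pow (norm_nonneg _) hk0]
      _ ≤ r.toReal ^ k := by gcongr
  refine (summable_geometric_of_lt_one (by positivity) ((div_lt_one hρ).2 hr))
    |>.of_norm_bounded_eventually_nat ?_
  filter_upwards [hbound] with k hk
  rw [Real.norm_of_nonneg (by positivity), div_pow]
  gcongr

theorem tendsto_partialSumDivPow_pow_smul_one_add_pow {κ : ℕ} (hκ : κ ≠ 0) {X : A} (hX : X ^ κ = 0)
    {z : ℂ} (hz : ‖z‖ ≤ 1) :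
    Tendsto (partialSumDivPow κ fun k => z ^ k • (1 + X) ^ k) atTop
      (𝓝 (if z = 1 then (κ ! : ℂ)⁻¹ • X ^ (κ - 1) else 0)) := by
  have hexpand : (partialSumDivPow κ fun k => z ^ k • (1 + X) ^ k)
      = fun n => ∑ m ∈ range κ,
          partialSumDivPow κ (fun k => ((k.choose m : ℂ) * z ^ k) • X ^ m) n := by
    rw [← partialSumDivPow_sum]
    congr 1
    ext k
    rw [one_add_pow_eq_sum_range_of_pow_eq_zero hX, smul_sum]
    refine sum_congr rfl fun m _ => ?_
    rw [mul_comm, mul_smul, ← nsmul_eq_mul, ← Nat.cast_smul_eq_nsmul ℂ]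
  have hlimit : (if z = 1 then (κ ! : ℂ)⁻¹ • X ^ (κ - 1) else 0)
      = ∑ m ∈ range κ, (if z = 1 ∧ m + 1 = κ then (κ ! : ℂ)⁻¹ else 0) • X ^ m := by
    split_ifs with hz1
    · rw [sum_eq_single (κ - 1)]
      · rw [if_pos ⟨hz1, by omega⟩]
      · intro m _ hm
        rw [if_neg (by omega), zero_smul]
      · simp; omega
    · simp [hz1]
  rw [hexpand, hlimit]
  refine tendsto_finsetSum _ fun m hm => ?_
  exact (tendsto_partialSumDivPow_choose_mul_pow hz (mem_range.1 hm)).partialSumDivPow_map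
    (ContinuousLinearMap.toSpanSingleton ℂ (X ^ m))

theorem tendsto_partialSumDivPow_zpow_smul_pow [CompleteSpace A] {ι : Type*} [Fintype ι]
    [DecidableEq ι] {κ : ℕ} (hκ : κ ≠ 0) {c : ℂ} (hc : c ≠ 0) {a : ι → ℂ}
    (ha : ∀ i, ‖a i‖ = ‖c‖) {S N : ι → A} {T : A}
    (hSS : ∀ i j, S i * S j = if i = j then S i else 0)
    (hSN : ∀ i j, S i * N j = if i = j then N j else 0)
    (hNS : ∀ i j, N j * S i = if i = j then N j else 0)
    (hNN : ∀ i j, N i * N j = if i = j then N i ^ 2 else 0)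
    (hNκ : ∀ i, N i ^ κ = 0)
    (hST : ∀ i, S i * T = 0) (hTS : ∀ i, T * S i = 0)
    (hNT : ∀ i, N i * T = 0) (hTN : ∀ i, T * N i = 0)
    (hT : spectralRadius ℂ T < ENNReal.ofReal ‖c‖) :
    Tendsto (partialSumDivPow κ fun k => c ^ (-(k : ℤ)) • (∑ i, (a i • S i + N i) + T) ^ k) atTop
      (𝓝 (∑ i, if a i = c then (κ ! : ℂ)⁻¹ • (a i)⁻¹ ^ (κ - 1) • (S i * N i ^ (κ - 1))
        else 0)) := by
  have ha0 : ∀ i, a i ≠ 0 := fun i => norm_ne_zero_iff.1 ((ha i).trans_ne (norm_ne_zero_iff.2 hc))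
  set X : ι → A := fun i => (a i)⁻¹ • N i with hXdef
  have hpow : ∀ k : ℕ, k ≠ 0 → (∑ i, S i * ((a i / c) ^ k • (1 + X i) ^ k) + c ^ (-(k : ℤ)) • T ^ k)
      = c ^ (-(k : ℤ)) • (∑ i, (a i • S i + N i) + T) ^ k := by
    intro k hk
    rw [pow_sum_smul_add_add ha0 hSS hSN hNS hNN hST hTS hNT hTN hk, smul_add, smul_sum]
    congr 1
    refine sum_congr rfl fun i _ => ?_
    rw [mul_smul_comm, smul_smul, zpow_neg, zpow_natCast, div_pow, div_eq_inv_mul]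
  have hblock : ∀ i, Tendsto (partialSumDivPow κ fun k => S i * ((a i / c) ^ k • (1 + X i) ^ k))
      atTop (𝓝 (S i * if a i / c = 1 then (κ ! : ℂ)⁻¹ • X i ^ (κ - 1) else 0)) := fun i =>
    (tendsto_partialSumDivPow_pow_smul_one_add_pow hκ (by simp [hXdef, smul_pow, hNκ])
      (by simp [ha, hc])).partialSumDivPow_map (ContinuousLinearMap.mul ℂ A (S i))
  have hrem : Tendsto (partialSumDivPow κ fun k => c ^ (-(k : ℤ)) • T ^ k) atTop (𝓝 0) := by
    refine tendsto_partialSumDivPow_zero_of_summable_norm hκ ?_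
    simpa [norm_smul, div_eq_inv_mul] using summable_norm_pow_div_pow_of_spectralRadius_lt hT
  have hlimit : (∑ i, if a i = c then (κ ! : ℂ)⁻¹ • (a i)⁻¹ ^ (κ - 1) • (S i * N i ^ (κ - 1))
      else 0) = (∑ i, S i * if a i / c = 1 then (κ ! : ℂ)⁻¹ • X i ^ (κ - 1) else 0) + 0 := by
    rw [add_zero]
    refine sum_congr rfl fun i _ => ?_
    simp only [div_eq_one_iff_eq hc, hXdef, smul_pow]
    split_ifs <;> simp
  refine Tendsto.partialSumDivPow_congr hκ hpow ?_
  rw [partialSumDivPow_add, partialSumDivPow_sum, hlimit]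
  exact (tendsto_finsetSum univ fun i _ => hblock i).add hrem

end NormedAlgebra

/-- For an operator `L = Σᵢ (γᵢ ρ Sᵢ + Nᵢ) + R` with the indicated
quasi-compact spectral decomposition (eigenvalues `γᵢ ρ` of modulus `ρ`, nilpotent parts
`Nᵢ` with `Nᵢ^κ = 0`, remainder `R` of spectral radius `< ρ`), the Cesàro-type averages
`n^{-κ} Σ_{k<n} γ^{-k} ρ^{-k} L^k` converge in operator norm: to `0` when `γ` is not one
of the `γᵢ`, and to `(1/κ!) (γᵢ ρ)^{1−κ} Nᵢ^{κ−1}` when `γ = γᵢ` (with `Nᵢ⁰`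
interpreted as `Sᵢ` when `κ = 1`). -/
theorem stmt7 {B : Type*} [NormedAddCommGroup B] [NormedSpace ℂ B] [CompleteSpace B]
    (ρ : ℝ) (hρ : 0 < ρ) (κ : ℕ) (hκ : 1 ≤ κ)
    {M : ℕ} (γ : Fin M → ℂ) (hγ : ∀ i, ‖γ i‖ = 1) (hinj : Function.Injective γ)
    (S N : Fin M → (B →L[ℂ] B)) (R : B →L[ℂ] B)
    (hSS : ∀ i j, S i * S j = if i = j then S i else 0)
    (hSN : ∀ i j, S i * N j = if i = j then N j else 0)
    (hNS : ∀ i j, N j * S i = if i = j then N j else 0)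
    (hNN : ∀ i j, N i * N j = if i = j then N i ^ 2 else 0)
    (hNκ : ∀ i, N i ^ κ = 0)
    (hSR : ∀ i, S i * R = 0) (hRS : ∀ i, R * S i = 0)
    (hNR : ∀ i, N i * R = 0) (hRN : ∀ i, R * N i = 0)
    (hspec : spectralRadius ℂ R < ENNReal.ofReal ρ)
    (L : B →L[ℂ] B)
    (hL : L = (∑ i, ((γ i * (ρ : ℂ)) • S i + N i)) + R) :
    ∀ γ₀ : ℂ, ‖γ₀‖ = 1 →
      ((∀ i, γ₀ ≠ γ i) →
        Filter.Tendsto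
          (fun nn : ℕ => (nn : ℂ) ^ (-(κ : ℤ)) •
            ∑ k ∈ Finset.range nn, (γ₀ ^ (-(k : ℤ)) * (ρ : ℂ) ^ (-(k : ℤ))) • L ^ k)
          Filter.atTop (nhds 0)) ∧
      (∀ i, γ₀ = γ i →
        Filter.Tendsto
          (fun nn : ℕ => (nn : ℂ) ^ (-(κ : ℤ)) •
            ∑ k ∈ Finset.range nn, (γ₀ ^ (-(k : ℤ)) * (ρ : ℂ) ^ (-(k : ℤ))) • L ^ k)
          Filter.atTop
          (nhds ((κ.factorial : ℂ)⁻¹ •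
            ((γ i * (ρ : ℂ)) ^ ((1 : ℤ) - (κ : ℤ)) •
              (if κ = 1 then S i else N i ^ (κ - 1)))))) := by
  intro γ₀ hγ₀
  have hγ₀0 : γ₀ ≠ 0 := norm_ne_zero_iff.1 (by simp [hγ₀])
  have hρ0 : (ρ : ℂ) ≠ 0 := Complex.ofReal_ne_zero.2 hρ.ne'
  have hcoef : ∀ i, γ i * (ρ : ℂ) = γ₀ * ρ ↔ γ₀ = γ i := fun i => by
    rw [mul_left_inj' hρ0, eq_comm]
  have hlim := tendsto_partialSumDivPow_zpow_smul_pow (by omega) (mul_ne_zero hγ₀0 hρ0)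
    (a := fun i => γ i * ρ) (fun i => by simp [hγ, hγ₀]) hSS hSN hNS hNN hNκ hSR hRS hNR hRN
    (by simpa [hγ₀, abs_of_pos hρ] using hspec)
  simp only [hcoef, ← hL, mul_zpow] at hlim
  refine ⟨fun hne => ?_, fun i hi => ?_⟩
  · simp only [hne, if_false, sum_const_zero] at hlim
    exact hlim
  · have hvalue : (κ ! : ℂ)⁻¹ • (γ i * ρ)⁻¹ ^ (κ - 1) • (S i * N i ^ (κ - 1))
        = (κ ! : ℂ)⁻¹ • ((γ i * ρ) ^ ((1 : ℤ) - κ) • if κ = 1 then S i else N i ^ (κ - 1)) := by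
      have hzpow : (γ i * (ρ : ℂ))⁻¹ ^ (κ - 1) = (γ i * ρ) ^ ((1 : ℤ) - κ) := by
        rw [inv_pow, ← zpow_natCast, ← zpow_neg, Nat.cast_sub hκ, Nat.cast_one, neg_sub]
      have hSNpow : S i * N i ^ (κ - 1) = if κ = 1 then S i else N i ^ (κ - 1) := by
        obtain ⟨j, rfl⟩ := Nat.exists_eq_add_one_of_ne_zero (Nat.one_le_iff_ne_zero.1 hκ)
        rcases j with _ | j
        · simp
        · simp [pow_succ', ← mul_assoc, by simpa using hSN i i]
      rw [hzpow, hSNpow]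
    rw [sum_eq_single i (fun j _ hj => if_neg fun h => hj (hinj (h.symm.trans hi))) (by simp),
      if_pos hi, hvalue] at hlim
    exact hlim
end

section
/- Let B be a complex normed vector space, L : B → B a bounded linear operator, ρ > 0, and ℓ a continuous linear functional on B satisfying ℓ(Lx) = ρ ℓ(x) for all x ∈ B. Let N be a seminorm on B, and suppose there exist C > 0 and σ ∈ (0, 1) such that ‖Lⁿ x‖ ≤ C σⁿ ρⁿ ‖x‖ + C ρⁿ N(x) for all n ≥ 1 and all x ∈ B. Then |ℓ(x)| ≤ C ‖ℓ‖ N(x) for all x ∈ B, where ‖ℓ‖ is the operator norm of ℓ. -/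
/-- If `ℓ` is a continuous linear functional with `ℓ ∘ L = ρ ℓ` and the
iterates of `L` satisfy `‖Lⁿ x‖ ≤ C σⁿ ρⁿ ‖x‖ + C ρⁿ N(x)` for a seminorm `N` and some
`σ ∈ (0,1)`, then `|ℓ(x)| ≤ C ‖ℓ‖ N(x)` for all `x`. -/
theorem stmt8 {B : Type*} [NormedAddCommGroup B] [NormedSpace ℂ B]
    (L : B →L[ℂ] B) (ρ : ℝ) (hρ : 0 < ρ)
    (ℓ : B →L[ℂ] ℂ) (hℓ : ∀ x, ℓ (L x) = (ρ : ℂ) * ℓ x)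
    (N : Seminorm ℂ B) (C σ : ℝ) (hC : 0 < C) (hσ0 : 0 < σ) (hσ1 : σ < 1)
    (hbound : ∀ n : ℕ, 1 ≤ n → ∀ x : B,
      ‖(L ^ n) x‖ ≤ C * σ ^ n * ρ ^ n * ‖x‖ + C * ρ ^ n * N x) :
    ∀ x : B, ‖ℓ x‖ ≤ C * ‖ℓ‖ * N x := by
  intro x
  have hiter : ∀ n : ℕ, ℓ ((L ^ n) x) = (ρ : ℂ) ^ n * ℓ x := by
    intro n
    induction n generalizing x with
    | zero => simp
    | succ n ih =>
      have : (L ^ (n + 1)) x = (L ^ n) (L x) := by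
        rw [pow_succ]; rfl
      rw [this, ih (L x), hℓ, pow_succ]
      ring
  have key : ∀ n : ℕ, 1 ≤ n → ‖ℓ x‖ ≤ C * ‖ℓ‖ * σ ^ n * ‖x‖ + C * ‖ℓ‖ * N x := by
    intro n hn
    have h1 : ρ ^ n * ‖ℓ x‖ = ‖ℓ ((L ^ n) x)‖ := by
      rw [hiter n, norm_mul, norm_pow, Complex.norm_real, Real.norm_of_nonneg hρ.le]
    have h2 : ‖ℓ ((L ^ n) x)‖ ≤ ‖ℓ‖ * ‖(L ^ n) x‖ := ℓ.le_opNorm _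
    have h3 := hbound n hn x
    have hℓ0 : (0:ℝ) ≤ ‖ℓ‖ := norm_nonneg _
    have hρn : (0:ℝ) < ρ ^ n := pow_pos hρ n
    have : ρ ^ n * ‖ℓ x‖ ≤ ρ ^ n * (C * ‖ℓ‖ * σ ^ n * ‖x‖ + C * ‖ℓ‖ * N x) := by
      calc ρ ^ n * ‖ℓ x‖ = ‖ℓ ((L ^ n) x)‖ := h1
        _ ≤ ‖ℓ‖ * ‖(L ^ n) x‖ := h2
        _ ≤ ‖ℓ‖ * (C * σ ^ n * ρ ^ n * ‖x‖ + C * ρ ^ n * N x) := by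
            exact mul_le_mul_of_nonneg_left h3 hℓ0
        _ = ρ ^ n * (C * ‖ℓ‖ * σ ^ n * ‖x‖ + C * ‖ℓ‖ * N x) := by ring
    exact le_of_mul_le_mul_left this hρn
  -- take limit n → ∞
  have hlim : Filter.Tendsto (fun n : ℕ => C * ‖ℓ‖ * σ ^ n * ‖x‖ + C * ‖ℓ‖ * N x)
      Filter.atTop (nhds (C * ‖ℓ‖ * 0 * ‖x‖ + C * ‖ℓ‖ * N x)) := by
    apply Filter.Tendsto.add _ tendsto_const_nhds
    exact (((tendsto_const_nhds.mul
      (tendsto_pow_atTop_nhds_zero_of_lt_one hσ0.le hσ1))).mul tendsto_const_nhds)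
  have := ge_of_tendsto hlim (Filter.eventually_atTop.2 ⟨1, key⟩)
  simpa using this
end

section
/- Let E be a finite dimensional complex normed vector space and let U ⊆ E be an open, bounded, convex neighborhood of 0 which is circled, i.e. for every x ∈ U and θ ∈ ℝ one has e^{iθ} x ∈ U. Define N'(ℓ) := sup_{x ∈ U} |ℓ(x)| for linear functionals ℓ on E, and N(x) := sup{ |ℓ(x)| : ℓ linear functional on E with N'(ℓ) ≤ 1 } for x ∈ E. Then N is a norm on E and U coincides with its open unit ball: U = { x ∈ E : N(x) < 1 }. -/
/-- The dual "norm" `N'(ℓ) = sup_{x ∈ U} |ℓ(x)|` of a linear functional `ℓ`,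
associated to a subset `U` of `E`. -/
noncomputable def dualGauge {E : Type*} [NormedAddCommGroup E] [NormedSpace ℂ E]
    (U : Set E) (ℓ : E →ₗ[ℂ] ℂ) : ℝ :=
  ⨆ x : U, ‖ℓ (x : E)‖

/-- The bidual gauge `N(x) = sup { |ℓ(x)| : ℓ linear functional with N'(ℓ) ≤ 1 }`. -/
noncomputable def bidualGauge {E : Type*} [NormedAddCommGroup E] [NormedSpace ℂ E]
    (U : Set E) (x : E) : ℝ :=
  ⨆ ℓ : {ℓ : E →ₗ[ℂ] ℂ // dualGauge U ℓ ≤ 1}, ‖(ℓ : E →ₗ[ℂ] ℂ) x‖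

/-!
`N ≤ 1` on `U` by definition of `N'`. Conversely, if `x ∉ U`, Hahn–Banach separation gives a
functional `f` with `Re f(x) = 1` and `Re f < 1` on `U`; rotating points of the circled set `U`
turns this into `|f| < 1` on `U`, so `N'(f) ≤ 1` and `N(x) ≥ |f(x)| ≥ 1`. Since `U` is open,
each `x ∈ U` has a multiple `r x ∈ U` with `r > 1`, whence `N(x) ≤ 1/r < 1`. As a supremum of
the seminorms `|ℓ|`, `N` is a seminorm; if `N(x) = 0` the whole line through `x` lies in the
bounded set `U`, forcing `x = 0`.
-/

open Complex Filter Topology Bornology Set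

lemma exists_gt_smul_mem {E : Type*} [AddCommGroup E] [TopologicalSpace E] [Module ℝ E]
    [ContinuousSMul ℝ E] {U : Set E} {t : ℝ} {x : E} (hU : U ∈ 𝓝 (t • x)) :
    ∃ s > t, s • x ∈ U :=
  ((((continuous_id.smul continuous_const).tendsto t).eventually hU).filter_mono
    (nhdsWithin_le_nhds (s := Ioi t)) |>.and self_mem_nhdsWithin).exists.imp
    fun _ h => ⟨h.2, h.1⟩

lemma eq_zero_of_forall_smul_mem {E : Type*} [NormedAddCommGroup E] [NormedSpace ℝ E]
    {U : Set E} (hUb : IsBounded U) {x : E} (h : ∀ t : ℝ, t • x ∈ U) : x = 0 := by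
  obtain ⟨R, hR⟩ := isBounded_iff_forall_norm_le.1 hUb
  by_contra hx
  have hpos := norm_pos_iff.2 hx
  have := hR _ (h ((|R| + 1) / ‖x‖))
  rw [norm_smul, Real.norm_of_nonneg (by positivity), div_mul_cancel₀ _ hpos.ne'] at this
  linarith [le_abs_self R]

lemma Complex.exp_neg_arg_mul_I_mul (z : ℂ) : exp ((-arg z : ℝ) * I) * z = ‖z‖ := by
  conv_lhs => rw [← norm_mul_exp_arg_mul_I z]
  rw [mul_left_comm, ← exp_add]
  simp

lemma norm_apply_lt_of_forall_re_lt_of_circled {E : Type*} [AddCommGroup E] [Module ℂ E]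
    {U : Set E} (hcirc : ∀ x ∈ U, ∀ θ : ℝ, exp (θ * I) • x ∈ U) {f : E →ₗ[ℂ] ℂ} {c : ℝ}
    (hf : ∀ x ∈ U, (f x).re < c) {x : E} (hx : x ∈ U) : ‖f x‖ < c := by
  have := hf _ (hcirc x hx (-arg (f x)))
  rwa [map_smul, smul_eq_mul, exp_neg_arg_mul_I_mul, ofReal_re] at this

section Gauge

variable {E : Type*} [NormedAddCommGroup E] [NormedSpace ℂ E] {U : Set E}

lemma bidualGauge_nonneg (x : E) : 0 ≤ bidualGauge U x :=
  Real.iSup_nonneg fun _ => norm_nonneg _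

lemma bidualGauge_smul (c : ℂ) (x : E) : bidualGauge U (c • x) = ‖c‖ * bidualGauge U x := by
  simp only [bidualGauge, map_smul, smul_eq_mul, norm_mul, Real.mul_iSup_of_nonneg (norm_nonneg c)]

variable [FiniteDimensional ℂ E]

lemma norm_apply_le_dualGauge (hUb : IsBounded U) (ℓ : E →ₗ[ℂ] ℂ) {a : E} (ha : a ∈ U) :
    ‖ℓ a‖ ≤ dualGauge U ℓ := by
  obtain ⟨C, hC⟩ := isBounded_iff_forall_norm_le.1
    ((LinearMap.toContinuousLinearMap ℓ).lipschitz.isBounded_image hUb)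
  refine le_ciSup (f := fun x : U => ‖ℓ x‖) ⟨C, ?_⟩ ⟨a, ha⟩
  rintro _ ⟨⟨x, hx⟩, rfl⟩
  simpa using hC _ ⟨x, hx, rfl⟩

lemma bidualGauge_bddAbove (hUb : IsBounded U) (hU : U ∈ 𝓝 0) (x : E) :
    BddAbove (range fun ℓ : {ℓ : E →ₗ[ℂ] ℂ // dualGauge U ℓ ≤ 1} => ‖(ℓ : E →ₗ[ℂ] ℂ) x‖) := by
  obtain ⟨ε, hε, hεx⟩ := exists_gt_smul_mem (t := 0) (x := x) (by rwa [zero_smul])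
  refine ⟨ε⁻¹, ?_⟩
  rintro _ ⟨⟨ℓ, hℓ⟩, rfl⟩
  have hℓε := (norm_apply_le_dualGauge hUb ℓ hεx).trans hℓ
  rw [← coe_smul, map_smul, smul_eq_mul, norm_mul, norm_real, Real.norm_of_nonneg hε.le]
    at hℓε
  rw [← one_div, le_div_iff₀ hε]
  linarith

lemma bidualGauge_add_le (hUb : IsBounded U) (hU : U ∈ 𝓝 0) (x y : E) :
    bidualGauge U (x + y) ≤ bidualGauge U x + bidualGauge U y := by
  refine Real.iSup_le (fun ℓ => ?_) (add_nonneg (bidualGauge_nonneg x) (bidualGauge_nonneg y))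
  rw [map_add]
  exact (norm_add_le _ _).trans (add_le_add (le_ciSup (bidualGauge_bddAbove hUb hU x) ℓ)
    (le_ciSup (bidualGauge_bddAbove hUb hU y) ℓ))

lemma bidualGauge_le_one_of_mem (hUb : IsBounded U) {a : E} (ha : a ∈ U) :
    bidualGauge U a ≤ 1 :=
  Real.iSup_le (fun ℓ => (norm_apply_le_dualGauge hUb ℓ.1 ha).trans ℓ.2) zero_le_one

lemma bidualGauge_lt_one_of_mem (hUo : IsOpen U) (hUb : IsBounded U) {x : E} (hx : x ∈ U) :
    bidualGauge U x < 1 := by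
  obtain ⟨r, hr, hrx⟩ :=
    exists_gt_smul_mem (t := 1) (x := x) (by rwa [one_smul, hUo.mem_nhds_iff])
  have hle := bidualGauge_le_one_of_mem hUb hrx
  rw [← coe_smul, bidualGauge_smul, norm_real, Real.norm_of_nonneg (by linarith)] at hle
  nlinarith [bidualGauge_nonneg (U := U) x]

lemma mem_of_bidualGauge_lt_one (hUo : IsOpen U) (hUb : IsBounded U) (hUc : Convex ℝ U)
    (h0 : (0 : E) ∈ U) (hcirc : ∀ x ∈ U, ∀ θ : ℝ, exp (θ * I) • x ∈ U) {x : E}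
    (hx : bidualGauge U x < 1) : x ∈ U := by
  by_contra hxU
  obtain ⟨f, hfx, hf⟩ := RCLike.separate_convex_open_set (𝕜 := ℂ) h0 hUc hUo hxU
  have hf1 : dualGauge U f ≤ 1 :=
    Real.iSup_le (fun a => (norm_apply_lt_of_forall_re_lt_of_circled hcirc
      (f := f) (by simpa using hf) a.2).le) zero_le_one
  have : 1 ≤ bidualGauge U x := calc
    1 = (f x).re := by simpa using hfx.symm
    _ ≤ ‖f x‖ := re_le_norm _
    _ ≤ bidualGauge U x := le_ciSup (bidualGauge_bddAbove hUb (hUo.mem_nhds h0) x) ⟨f, hf1⟩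
  linarith

end Gauge

/-- For an open, bounded, convex, circled neighborhood `U` of `0` in a
finite dimensional complex normed space `E`, the function `N = bidualGauge U` is a norm
on `E` and `U` is exactly its open unit ball. -/
theorem stmt10 {E : Type*} [NormedAddCommGroup E] [NormedSpace ℂ E]
    [FiniteDimensional ℂ E]
    (U : Set E) (hUo : IsOpen U) (hUb : Bornology.IsBounded U) (hUc : Convex ℝ U)
    (h0 : (0 : E) ∈ U)
    (hcirc : ∀ x ∈ U, ∀ θ : ℝ, Complex.exp (θ * Complex.I) • x ∈ U) :
    ((∀ x : E, bidualGauge U x = 0 → x = 0) ∧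
      (∀ (c : ℂ) (x : E), bidualGauge U (c • x) = ‖c‖ * bidualGauge U x) ∧
      (∀ x y : E, bidualGauge U (x + y) ≤ bidualGauge U x + bidualGauge U y)) ∧
    U = {x : E | bidualGauge U x < 1} := by
  refine ⟨⟨fun x hx => ?_, bidualGauge_smul, bidualGauge_add_le hUb (hUo.mem_nhds h0)⟩, ?_⟩
  · refine eq_zero_of_forall_smul_mem hUb fun t =>
      mem_of_bidualGauge_lt_one hUo hUb hUc h0 hcirc ?_
    rw [← coe_smul, bidualGauge_smul, hx, mul_zero]
    exact one_pos
  · ext x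
    exact ⟨bidualGauge_lt_one_of_mem hUo hUb, mem_of_bidualGauge_lt_one hUo hUb hUc h0 hcirc⟩
end
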